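/- arXiv:1711.07076 — 6 statements merged into one kernel-verified Lean document; each statement's English description precedes it below -/
import Mathlib

section
/- Among all decision rules d with P(d(X,Z)=1 | Z=a) = q_a and P(d(X,Z)=1 | Z=b) = q_b fixed, the rule that sets d=1 on the points of each group with the highest conditional probability p(X,Z), i.e. a per-group threshold rule d*(x,z) = 1{p(x,z) ≥ t_z} with t_z chosen as the (1 − q_z)-quantile of p within group z, maximizes u(d, 1/2) = E[d(X,Z)(p(X,Z) − 1/2)]. -/
open MeasureTheory Set

/-! In each group `z`, write `d*` for the threshold rule at `t z` and `d` for a competitor with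
the same rate. Pointwise `(d* - d) (p - t z) ≥ 0`, because `d* = 1` exactly where `p ≥ t z`
and `0 ≤ d ≤ 1`. Equal rates mean `∫ (d* - d) = 0` on the group, so the constant `t z` may be
replaced by `1/2` at no cost: `∫ (d* - d) (p - 1/2) ≥ 0` on each group (the bathtub principle).
Summing over the two groups gives the claim. -/

section

variable {Ω : Type*} [MeasurableSpace Ω] {ν : Measure Ω}

lemma ae_norm_le_one_of_mem_Icc {h : Ω → ℝ} (h01 : ∀ ω, h ω ∈ Icc (0 : ℝ) 1) :
    ∀ᵐ ω ∂ν, ‖h ω‖ ≤ 1 :=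
  .of_forall fun ω => by
    rw [Real.norm_eq_abs, abs_le]; constructor <;> linarith [(h01 ω).1, (h01 ω).2]

lemma integrable_mul_sub [IsFiniteMeasure ν] {h P : Ω → ℝ} (hh : Measurable h)
    (h01 : ∀ ω, h ω ∈ Icc (0 : ℝ) 1) (hP : Integrable P ν) (c : ℝ) :
    Integrable (fun ω => h ω * (P ω - c)) ν :=
  (hP.sub (integrable_const c)).bdd_mul hh.aestronglyMeasurable (ae_norm_le_one_of_mem_Icc h01)

lemma ite_mem_Icc_zero_one (q : Prop) [Decidable q] :
    (if q then (1 : ℝ) else 0) ∈ Icc (0 : ℝ) 1 := by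
  split_ifs <;> simp

lemma threshold_sub_mul_sub_nonneg {x t g : ℝ} (hg : g ∈ Icc (0 : ℝ) 1) :
    0 ≤ ((if t ≤ x then 1 else 0) - g) * (x - t) := by
  obtain ⟨hg0, hg1⟩ := hg
  split_ifs with h
  · exact mul_nonneg (by linarith) (by linarith)
  · exact mul_nonneg_of_nonpos_of_nonpos (by linarith) (by linarith)

theorem integral_mul_sub_le_threshold [IsFiniteMeasure ν] {P g : Ω → ℝ} (hP : Measurable P)
    (hPi : Integrable P ν) (hg : Measurable g) (hg01 : ∀ ω, g ω ∈ Icc (0 : ℝ) 1) {t : ℝ}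
    (hrate : ∫ ω, g ω ∂ν = ν.real {ω | t ≤ P ω}) (c : ℝ) :
    ∫ ω, g ω * (P ω - c) ∂ν ≤ ∫ ω, (if t ≤ P ω then 1 else 0) * (P ω - c) ∂ν := by
  set f : Ω → ℝ := fun ω => if t ≤ P ω then 1 else 0
  have hT : MeasurableSet {ω | t ≤ P ω} := measurableSet_le measurable_const hP
  have hf_eq : f = {ω | t ≤ P ω}.indicator 1 := by
    ext ω; simp only [f, indicator_apply, mem_ofPred_eq, Pi.one_apply]
  have hf01 : ∀ ω, f ω ∈ Icc (0 : ℝ) 1 := fun ω => ite_mem_Icc_zero_one _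
  have hfm : Measurable f := hf_eq ▸ measurable_one.indicator hT
  have hfi : Integrable f ν :=
    .of_bound hfm.aestronglyMeasurable 1 (ae_norm_le_one_of_mem_Icc hf01)
  have hgi : Integrable g ν :=
    .of_bound hg.aestronglyMeasurable 1 (ae_norm_le_one_of_mem_Icc hg01)
  have hfci := integrable_mul_sub hfm hf01 hPi c
  have hgci := integrable_mul_sub hg hg01 hPi c
  have hmass : ∫ ω, f ω ∂ν = ∫ ω, g ω ∂ν := by rw [hrate, hf_eq, integral_indicator_one hT]
  have hgain : 0 ≤ ∫ ω, (f ω - g ω) * (P ω - t) ∂ν :=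
    integral_nonneg fun ω => threshold_sub_mul_sub_nonneg (hg01 ω)
  have hsplit : ∫ ω, (f ω - g ω) * (P ω - t) ∂ν
      = ∫ ω, f ω * (P ω - c) ∂ν - ∫ ω, g ω * (P ω - c) ∂ν
        - (t - c) * (∫ ω, f ω ∂ν - ∫ ω, g ω ∂ν) := by
    have h1 : Integrable (fun ω => f ω * (P ω - c) - g ω * (P ω - c)) ν := hfci.sub hgci
    have h2 : Integrable (fun ω => (t - c) * (f ω - g ω)) ν := (hfi.sub hgi).const_mul _
    rw [← integral_sub hfci hgci, ← integral_sub hfi hgi, ← integral_const_mul,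
      ← integral_sub h1 h2]
    congr 1; ext ω; ring
  rw [hmass, sub_self, mul_zero, sub_zero] at hsplit
  linarith

lemma integral_eq_measureReal_of_forall_eq_zero_or_one {g : Ω → ℝ} (hg : Measurable g)
    (hg01 : ∀ ω, g ω = 0 ∨ g ω = 1) : ∫ ω, g ω ∂ν = ν.real {ω | g ω = 1} := by
  have hg_eq : g = {ω | g ω = 1}.indicator 1 := by
    ext ω; rcases hg01 ω with h | h <;> simp [h]
  conv_lhs => rw [hg_eq]
  exact integral_indicator_one (hg (measurableSet_singleton 1))

lemma integral_eq_sum_setIntegral_fiber {ι : Type*} [Fintype ι] [MeasurableSpace ι]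
    [MeasurableSingletonClass ι] {Z : Ω → ι} (hZ : Measurable Z) {h : Ω → ℝ}
    (hh : Integrable h ν) : ∫ ω, h ω ∂ν = ∑ i, ∫ ω in {ω | Z ω = i}, h ω ∂ν := by
  rw [← integral_iUnion_fintype (s := fun i => {ω | Z ω = i})
    (fun i => hZ (measurableSet_singleton i))
    (fun i j hij => disjoint_left.2 fun ω hi hj => hij (hi.symm.trans hj))
    (fun i => hh.integrableOn)]
  have hcover : (⋃ i, {ω | Z ω = i}) = univ := iUnion_eq_univ_iff.2 fun ω => ⟨Z ω, rfl⟩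
  rw [hcover, setIntegral_univ]

theorem integral_le_integral_of_forall_setIntegral_fiber_le {ι : Type*} [Fintype ι]
    [MeasurableSpace ι] [MeasurableSingletonClass ι] {Z : Ω → ι} (hZ : Measurable Z)
    {f g : Ω → ℝ} (hf : Integrable f ν) (hg : Integrable g ν)
    (hle : ∀ i, ∫ ω in {ω | Z ω = i}, f ω ∂ν ≤ ∫ ω in {ω | Z ω = i}, g ω ∂ν) :
    ∫ ω, f ω ∂ν ≤ ∫ ω, g ω ∂ν := by
  rw [integral_eq_sum_setIntegral_fiber hZ hf, integral_eq_sum_setIntegral_fiber hZ hg]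
  exact Finset.sum_le_sum fun i _ => hle i

lemma measurable_comp_pair_of_countable {α β γ : Type*} [MeasurableSpace α]
    [MeasurableSpace β] [MeasurableSpace γ] [Countable β] [MeasurableSingletonClass β]
    {f : α → β → γ} (hf : ∀ b, Measurable (f · b)) {X : Ω → α} {Z : Ω → β}
    (hX : Measurable X) (hZ : Measurable Z) : Measurable fun ω => f (X ω) (Z ω) :=
  (measurable_from_prod_countable_left (f := fun xz : α × β => f xz.1 xz.2) hf).comp
    (hX.prodMk hZ)

end

theorem per_group_threshold_optimal_general
    {Ω 𝒳 : Type*} [MeasurableSpace Ω] [MeasurableSpace 𝒳]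
    (μ : Measure Ω) [IsProbabilityMeasure μ]
    (X : Ω → 𝒳) (Z : Ω → Bool)
    (hX : Measurable X) (hZ : Measurable Z)
    (p : 𝒳 → Bool → ℝ) (hp : ∀ z, Measurable fun x => p x z)
    (hp01 : ∀ x z, p x z ∈ Set.Icc (0 : ℝ) 1)
    (hZpos : ∀ z, 0 < (μ {ω | Z ω = z}).toReal)
    (q t : Bool → ℝ)
    -- t z is the (1 - q z)-quantile of p within group z
    (ht : ∀ z, (μ ({ω | t z ≤ p (X ω) (Z ω)} ∩ {ω | Z ω = z})).toReal
        / (μ {ω | Z ω = z}).toReal = q z)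
    (dstar : 𝒳 → Bool → ℝ)
    (hdstar : ∀ x z, dstar x z = if t z ≤ p x z then 1 else 0) :
    ∀ d : 𝒳 → Bool → ℝ,
      (∀ x z, d x z = 0 ∨ d x z = 1) →
      (∀ z, Measurable fun x => d x z) →
      (∀ z, (μ ({ω | d (X ω) (Z ω) = 1} ∩ {ω | Z ω = z})).toReal
          / (μ {ω | Z ω = z}).toReal = q z) →
      ∫ ω, d (X ω) (Z ω) * (p (X ω) (Z ω) - 1 / 2) ∂μ
        ≤ ∫ ω, dstar (X ω) (Z ω) * (p (X ω) (Z ω) - 1 / 2) ∂μ := by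
  intro d hd01 hdm hdq
  obtain rfl : dstar = fun x z => if t z ≤ p x z then 1 else 0 := funext₂ hdstar
  have hPm := measurable_comp_pair_of_countable hp hX hZ
  have hPi : Integrable (fun ω => p (X ω) (Z ω)) μ :=
    .of_bound hPm.aestronglyMeasurable 1 (ae_norm_le_one_of_mem_Icc fun ω => hp01 _ _)
  have hdm' := measurable_comp_pair_of_countable hdm hX hZ
  have hd_Icc : ∀ x z, d x z ∈ Icc (0 : ℝ) 1 := fun x z => by
    rcases hd01 x z with h | h <;> simp [h]
  have hdstarm : Measurable fun ω => if t (Z ω) ≤ p (X ω) (Z ω) then (1 : ℝ) else 0 :=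
    Measurable.ite (measurableSet_le ((measurable_of_countable t).comp hZ) hPm)
      measurable_const measurable_const
  refine integral_le_integral_of_forall_setIntegral_fiber_le hZ
    (integrable_mul_sub hdm' (fun ω => hd_Icc _ _) hPi _)
    (integrable_mul_sub hdstarm (fun ω => ite_mem_Icc_zero_one _) hPi _) fun z => ?_
  have hrate : ∫ ω in {ω | Z ω = z}, d (X ω) (Z ω) ∂μ
      = (μ.restrict {ω | Z ω = z}).real {ω | t z ≤ p (X ω) (Z ω)} := by
    rw [integral_eq_measureReal_of_forall_eq_zero_or_one hdm' fun ω => hd01 _ _,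
      measureReal_restrict_apply (measurableSet_eq_fun hdm' measurable_const),
      measureReal_restrict_apply (measurableSet_le measurable_const hPm)]
    exact (div_left_inj' (hZpos z).ne').1 ((hdq z).trans (ht z).symm)
  calc _ ≤ _ := integral_mul_sub_le_threshold hPm hPi.restrict hdm' (fun ω => hd_Icc _ _) hrate _
    _ = _ := setIntegral_congr_fun (hZ (measurableSet_singleton z)) fun ω hω => by
      simp only [show Z ω = z from hω]

/-- Among all decision rules with fixed group-wise positive
rates `q z = P(d(X,Z)=1 | Z=z)` (groups `z : Bool`, `true = a`, `false = b`),
the per-group threshold rule `d*(x,z) = 1{p(x,z) ≥ t z}`, with `t z` the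
`(1 − q z)`-quantile of `p(X,Z)` within group `z` (i.e.
`P(p(X,Z) ≥ t z | Z=z) = q z`), maximizes the immediate utility
`u(d,1/2) = E[d(X,Z)(p(X,Z) − 1/2)]`. -/
theorem per_group_threshold_optimal
    {Ω 𝒳 : Type*} [MeasurableSpace Ω] [MeasurableSpace 𝒳]
    (μ : Measure Ω) [IsProbabilityMeasure μ]
    (X : Ω → 𝒳) (Z : Ω → Bool)
    (hX : Measurable X) (hZ : Measurable Z)
    (p : 𝒳 → Bool → ℝ) (hp : ∀ z, Measurable fun x => p x z)
    (hp01 : ∀ x z, p x z ∈ Set.Icc (0 : ℝ) 1)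
    (hZpos : ∀ z, 0 < (μ {ω | Z ω = z}).toReal)
    -- within each group, p(X,Z) has a continuous (atomless) distribution
    (hatomless : ∀ z r, μ ({ω | p (X ω) (Z ω) = r} ∩ {ω | Z ω = z}) = 0)
    (q t : Bool → ℝ) (hq : ∀ z, q z ∈ Set.Icc (0 : ℝ) 1)
    -- t z is the (1 - q z)-quantile of p within group z
    (ht : ∀ z, (μ ({ω | t z ≤ p (X ω) (Z ω)} ∩ {ω | Z ω = z})).toReal
        / (μ {ω | Z ω = z}).toReal = q z)
    (dstar : 𝒳 → Bool → ℝ)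
    (hdstar : ∀ x z, dstar x z = if t z ≤ p x z then 1 else 0) :
    ∀ d : 𝒳 → Bool → ℝ,
      (∀ x z, d x z = 0 ∨ d x z = 1) →
      (∀ z, Measurable fun x => d x z) →
      (∀ z, (μ ({ω | d (X ω) (Z ω) = 1} ∩ {ω | Z ω = z})).toReal
          / (μ {ω | Z ω = z}).toReal = q z) →
      ∫ ω, d (X ω) (Z ω) * (p (X ω) (Z ω) - 1 / 2) ∂μ
        ≤ ∫ ω, dstar (X ω) (Z ω) * (p (X ω) (Z ω) - 1 / 2) ∂μ :=
  per_group_threshold_optimal_general μ X Z hX hZ p hp hp01 hZpos q t ht dstar hdstar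
end

section
/- Let d* be the per-group-threshold rule d*(x,z) = 1{p(x,z) ≥ t_z} with group-wise positive rates q_a, q_b, and let d' be any other decision rule achieving the same group-wise positive rates q_a and q_b. Then u(d*, 1/2) − u(d', 1/2) = (E[p − 1/2 | d*=1, d'=0] − E[p − 1/2 | d*=0, d'=1])·P(d*=1, d'=0) ≥ 0, with equality if and only if P(d*(X,Z) ≠ d'(X,Z)) = 0. -/
/-!
Write `D`, `D'` for the two rules evaluated at `(X, Z)` and `s = p(X, Z)`. Equal positive rates in
every group mean `∫ (D - D') k(Z) = 0` for every function `k` of the group. With `k = t - 1/2` this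
turns the utility gap into `∫ (D - D') (s - t(Z))`, whose integrand is pointwise nonnegative because
`D = 1` exactly where `s ≥ t(Z)`. It vanishes only where `D = D'` or `s = t(Z)`, and the second set
is null because `p(X, Z)` has no atoms within a group. With `k = 1` one gets
`P(D = 1, D' = 0) = P(D = 0, D' = 1)`, which puts `∫_{D=1,D'=0} - ∫_{D=0,D'=1}` in the stated
conditional-expectation form.
-/

open MeasureTheory

section DecisionRules

variable {Ω G : Type*} [MeasurableSpace Ω] {μ : Measure Ω} {D D' : Ω → ℝ}

lemma measurable_comp_of_measurable_slices {𝒳 γ : Type*} [MeasurableSpace 𝒳] [MeasurableSpace γ]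
    [MeasurableSpace G] [Countable G] [MeasurableSingletonClass G] {f : 𝒳 → G → γ}
    (hf : ∀ z, Measurable fun x => f x z)
    {X : Ω → 𝒳} {Z : Ω → G} (hX : Measurable X) (hZ : Measurable Z) :
    Measurable fun ω => f (X ω) (Z ω) :=
  (measurable_from_prod_countable_left (f := Function.uncurry f) hf).comp (hX.prodMk hZ)

lemma integrable_comp_of_finite [IsFiniteMeasure μ] [MeasurableSpace G] [Finite G]
    [MeasurableSingletonClass G]
    {Z : Ω → G} (hZ : Measurable Z) (k : G → ℝ) : Integrable (fun ω => k (Z ω)) μ := by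
  obtain ⟨C, hC⟩ := (Set.finite_range fun z => ‖k z‖).bddAbove
  exact .of_bound ((Measurable.of_discrete (f := k)).comp hZ).aestronglyMeasurable C
    (ae_of_all _ fun ω => hC ⟨Z ω, rfl⟩)

lemma integrable_zero_one_mul {h : Ω → ℝ} (hh : Integrable h μ) (hD : Measurable D)
    (hD01 : ∀ ω, D ω = 0 ∨ D ω = 1) : Integrable (fun ω => D ω * h ω) μ :=
  hh.bdd_mul (c := 1) hD.aestronglyMeasurable
    (ae_of_all _ fun ω => by rcases hD01 ω with h | h <;> simp [h])

lemma integrable_zero_one_sub_mul {h : Ω → ℝ} (hh : Integrable h μ)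
    (hD : Measurable D) (hD01 : ∀ ω, D ω = 0 ∨ D ω = 1)
    (hD' : Measurable D') (hD'01 : ∀ ω, D' ω = 0 ∨ D' ω = 1) :
    Integrable (fun ω => (D ω - D' ω) * h ω) μ :=
  ((integrable_zero_one_mul hh hD hD01).sub (integrable_zero_one_mul hh hD' hD'01)).congr
    (ae_of_all _ fun _ => (sub_mul _ _ _).symm)

lemma integral_mul_sub_integral_mul_eq_setIntegral_sub {h : Ω → ℝ} (hh : Integrable h μ)
    (hD : Measurable D) (hD01 : ∀ ω, D ω = 0 ∨ D ω = 1)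
    (hD' : Measurable D') (hD'01 : ∀ ω, D' ω = 0 ∨ D' ω = 1) :
    ∫ ω, D ω * h ω ∂μ - ∫ ω, D' ω * h ω ∂μ
      = ∫ ω in {ω | D ω = 1 ∧ D' ω = 0}, h ω ∂μ - ∫ ω in {ω | D ω = 0 ∧ D' ω = 1}, h ω ∂μ := by
  have hA : MeasurableSet {ω | D ω = 1 ∧ D' ω = 0} :=
    (hD (measurableSet_singleton 1)).inter (hD' (measurableSet_singleton 0))
  have hB : MeasurableSet {ω | D ω = 0 ∧ D' ω = 1} :=
    (hD (measurableSet_singleton 0)).inter (hD' (measurableSet_singleton 1))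
  rw [← integral_sub (integrable_zero_one_mul hh hD hD01)
      (integrable_zero_one_mul hh hD' hD'01),
    ← integral_indicator hA, ← integral_indicator hB,
    ← integral_sub (hh.indicator hA) (hh.indicator hB)]
  congr 1 with ω
  rcases hD01 ω with h1 | h1 <;> rcases hD'01 ω with h2 | h2 <;> simp [Set.indicator, h1, h2]

lemma integral_zero_one_mul_comp_eq_sum [MeasurableSpace G] [Fintype G]
    [MeasurableSingletonClass G] [IsFiniteMeasure μ]
    (hD : Measurable D) (hD01 : ∀ ω, D ω = 0 ∨ D ω = 1)
    {Z : Ω → G} (hZ : Measurable Z) (k : G → ℝ) :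
    ∫ ω, D ω * k (Z ω) ∂μ = ∑ z, k z * μ.real ({ω | D ω = 1} ∩ {ω | Z ω = z}) := by
  have hS : ∀ z, MeasurableSet ({ω | D ω = 1} ∩ {ω | Z ω = z}) := fun z =>
    (hD (measurableSet_singleton 1)).inter (hZ (measurableSet_singleton z))
  have hpt : ∀ ω, D ω * k (Z ω)
      = ∑ z, k z * ({ω | D ω = 1} ∩ {ω | Z ω = z}).indicator 1 ω := by
    intro ω
    rw [Finset.sum_eq_single (Z ω) (fun z _ hz => by simp [Set.indicator, Ne.symm hz])
      (by simp)]
    rcases hD01 ω with h | h <;> simp [Set.indicator, h, mul_comm]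
  simp_rw [hpt]
  rw [integral_finsetSum]
  · simp_rw [integral_const_mul, integral_indicator_one (hS _)]
  · exact fun z _ => ((integrable_const 1).indicator (hS z)).const_mul (k z)

lemma integral_zero_one_mul_comp_eq_of_measureReal_eq [MeasurableSpace G] [Fintype G]
    [MeasurableSingletonClass G] [IsFiniteMeasure μ]
    (hD : Measurable D) (hD01 : ∀ ω, D ω = 0 ∨ D ω = 1)
    (hD' : Measurable D') (hD'01 : ∀ ω, D' ω = 0 ∨ D' ω = 1) {Z : Ω → G} (hZ : Measurable Z)
    (hrates : ∀ z, μ.real ({ω | D' ω = 1} ∩ {ω | Z ω = z})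
      = μ.real ({ω | D ω = 1} ∩ {ω | Z ω = z})) (k : G → ℝ) :
    ∫ ω, D ω * k (Z ω) ∂μ = ∫ ω, D' ω * k (Z ω) ∂μ := by
  simp only [integral_zero_one_mul_comp_eq_sum hD hD01 hZ,
    integral_zero_one_mul_comp_eq_sum hD' hD'01 hZ, hrates]

lemma measureReal_one_zero_eq_measureReal_zero_one [MeasurableSpace G] [Fintype G]
    [MeasurableSingletonClass G] [IsFiniteMeasure μ]
    (hD : Measurable D) (hD01 : ∀ ω, D ω = 0 ∨ D ω = 1)
    (hD' : Measurable D') (hD'01 : ∀ ω, D' ω = 0 ∨ D' ω = 1) {Z : Ω → G} (hZ : Measurable Z)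
    (hrates : ∀ z, μ.real ({ω | D' ω = 1} ∩ {ω | Z ω = z})
      = μ.real ({ω | D ω = 1} ∩ {ω | Z ω = z})) :
    μ.real {ω | D ω = 1 ∧ D' ω = 0} = μ.real {ω | D ω = 0 ∧ D' ω = 1} := by
  have h := integral_mul_sub_integral_mul_eq_setIntegral_sub (integrable_const (μ := μ) (1 : ℝ))
    hD hD01 hD' hD'01
  have hrate := integral_zero_one_mul_comp_eq_of_measureReal_eq hD hD01 hD' hD'01 hZ hrates 1
  simp only [Pi.one_apply] at hrate
  rw [hrate, sub_self, setIntegral_const, setIntegral_const, smul_eq_mul, smul_eq_mul, mul_one,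
    mul_one] at h
  linarith

lemma setIntegral_sub_setIntegral_eq_div_sub_div_mul [IsFiniteMeasure μ] {A B : Set Ω}
    (hAB : μ.real A = μ.real B) (f : Ω → ℝ) :
    ∫ ω in A, f ω ∂μ - ∫ ω in B, f ω ∂μ
      = ((∫ ω in A, f ω ∂μ) / μ.real A - (∫ ω in B, f ω ∂μ) / μ.real B) * μ.real A := by
  by_cases hA : μ.real A = 0
  · rw [setIntegral_measure_zero f ((measureReal_eq_zero_iff).1 hA),
      setIntegral_measure_zero f ((measureReal_eq_zero_iff).1 (hAB ▸ hA)), hA]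
    simp
  · rw [← hAB, sub_mul, div_mul_cancel₀ _ hA, div_mul_cancel₀ _ hA]

lemma integral_zero_one_mul_sub_eq_integral_sub_mul [MeasurableSpace G] [Fintype G]
    [MeasurableSingletonClass G] [IsFiniteMeasure μ] (hD : Measurable D)
    (hD01 : ∀ ω, D ω = 0 ∨ D ω = 1) (hD' : Measurable D') (hD'01 : ∀ ω, D' ω = 0 ∨ D' ω = 1)
    {Z : Ω → G} (hZ : Measurable Z)
    (hrates : ∀ z, μ.real ({ω | D' ω = 1} ∩ {ω | Z ω = z})
      = μ.real ({ω | D ω = 1} ∩ {ω | Z ω = z}))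
    {s : Ω → ℝ} (hs : Integrable s μ) (τ : G → ℝ) (c : ℝ) :
    ∫ ω, D ω * (s ω - c) ∂μ - ∫ ω, D' ω * (s ω - c) ∂μ
      = ∫ ω, (D ω - D' ω) * (s ω - τ (Z ω)) ∂μ := by
  have hg : Integrable (fun ω => s ω - τ (Z ω)) μ := hs.sub (integrable_comp_of_finite hZ τ)
  have hk : Integrable (fun ω => τ (Z ω) - c) μ := integrable_comp_of_finite hZ (fun z => τ z - c)
  have hsplit : ∀ E : Ω → ℝ, Measurable E → (∀ ω, E ω = 0 ∨ E ω = 1) →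
      ∫ ω, E ω * (s ω - c) ∂μ
        = ∫ ω, E ω * (s ω - τ (Z ω)) ∂μ + ∫ ω, E ω * (τ (Z ω) - c) ∂μ := by
    intro E hE hE01
    rw [← integral_add (integrable_zero_one_mul hg hE hE01) (integrable_zero_one_mul hk hE hE01)]
    congr 1 with ω
    ring
  have hgroup := integral_zero_one_mul_comp_eq_of_measureReal_eq hD hD01 hD' hD'01 hZ hrates
    (fun z => τ z - c)
  rw [hsplit D hD hD01, hsplit D' hD' hD'01, hgroup, add_sub_add_right_eq_sub,
    ← integral_sub (integrable_zero_one_mul hg hD hD01) (integrable_zero_one_mul hg hD' hD'01)]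
  congr 1 with ω
  ring

lemma ae_sub_mul_eq_zero_iff {e : Ω → ℝ} (he : ∀ᵐ ω ∂μ, e ω ≠ 0) :
    (fun ω => (D ω - D' ω) * e ω) =ᵐ[μ] 0 ↔ μ {ω | D ω ≠ D' ω} = 0 := by
  refine ⟨fun h => ae_iff.1 ?_, fun h => ?_⟩
  · filter_upwards [h, he] with ω hω he
    simpa [he, sub_eq_zero] using hω
  · filter_upwards [ae_iff.2 h] with ω hω
    simp [hω]

lemma ae_sub_comp_ne_zero [Countable G] {s : Ω → ℝ} {Z : Ω → G}
    (hnull : ∀ z r, μ ({ω | s ω = r} ∩ {ω | Z ω = z}) = 0) (τ : G → ℝ) :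
    ∀ᵐ ω ∂μ, s ω - τ (Z ω) ≠ 0 := by
  refine ae_iff.2 (measure_mono_null (fun ω hω => ?_) (measure_iUnion_null fun z => hnull z (τ z)))
  exact Set.mem_iUnion.2 ⟨Z ω, sub_eq_zero.1 (not_not.1 hω), rfl⟩

end DecisionRules

lemma threshold_sub_mul_nonneg {τ x d : ℝ} (hd : d = 0 ∨ d = 1) :
    0 ≤ ((if τ ≤ x then 1 else 0) - d) * (x - τ) := by
  split_ifs with h
  · rcases hd with rfl | rfl <;> linarith
  · rcases hd with rfl | rfl <;> linarith [not_le.1 h]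

theorem threshold_vs_other_rule_utility_gap_general
    {Ω 𝒳 : Type*} [MeasurableSpace Ω] [MeasurableSpace 𝒳]
    (μ : Measure Ω) [IsProbabilityMeasure μ]
    (X : Ω → 𝒳) (Z : Ω → Bool)
    (hX : Measurable X) (hZ : Measurable Z)
    (p : 𝒳 → Bool → ℝ) (hp : ∀ z, Measurable fun x => p x z)
    (hp01 : ∀ x z, p x z ∈ Set.Icc (0 : ℝ) 1)
    (hatomless : ∀ z r, μ ({ω | p (X ω) (Z ω) = r} ∩ {ω | Z ω = z}) = 0)
    (t : Bool → ℝ)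
    (dstar : 𝒳 → Bool → ℝ)
    (hdstar : ∀ x z, dstar x z = if t z ≤ p x z then 1 else 0)
    (d' : 𝒳 → Bool → ℝ)
    (hd'01 : ∀ x z, d' x z = 0 ∨ d' x z = 1)
    (hd'meas : ∀ z, Measurable fun x => d' x z)
    -- d' achieves the same group-wise positive rates as d*
    (hrates : ∀ z,
      (μ ({ω | d' (X ω) (Z ω) = 1} ∩ {ω | Z ω = z})).toReal
        = (μ ({ω | dstar (X ω) (Z ω) = 1} ∩ {ω | Z ω = z})).toReal) :
    (∫ ω, dstar (X ω) (Z ω) * (p (X ω) (Z ω) - 1 / 2) ∂μ)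
      - (∫ ω, d' (X ω) (Z ω) * (p (X ω) (Z ω) - 1 / 2) ∂μ)
    = (((∫ ω in {ω | dstar (X ω) (Z ω) = 1 ∧ d' (X ω) (Z ω) = 0},
          (p (X ω) (Z ω) - 1 / 2) ∂μ)
        / (μ {ω | dstar (X ω) (Z ω) = 1 ∧ d' (X ω) (Z ω) = 0}).toReal)
      - ((∫ ω in {ω | dstar (X ω) (Z ω) = 0 ∧ d' (X ω) (Z ω) = 1},
          (p (X ω) (Z ω) - 1 / 2) ∂μ)
        / (μ {ω | dstar (X ω) (Z ω) = 0 ∧ d' (X ω) (Z ω) = 1}).toReal))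
      * (μ {ω | dstar (X ω) (Z ω) = 1 ∧ d' (X ω) (Z ω) = 0}).toReal
    ∧ 0 ≤ (∫ ω, dstar (X ω) (Z ω) * (p (X ω) (Z ω) - 1 / 2) ∂μ)
          - (∫ ω, d' (X ω) (Z ω) * (p (X ω) (Z ω) - 1 / 2) ∂μ)
    ∧ ((∫ ω, dstar (X ω) (Z ω) * (p (X ω) (Z ω) - 1 / 2) ∂μ)
          = (∫ ω, d' (X ω) (Z ω) * (p (X ω) (Z ω) - 1 / 2) ∂μ)
        ↔ μ {ω | dstar (X ω) (Z ω) ≠ d' (X ω) (Z ω)} = 0) := by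
  have hs : Measurable fun ω => p (X ω) (Z ω) := measurable_comp_of_measurable_slices hp hX hZ
  have hsi : Integrable (fun ω => p (X ω) (Z ω)) μ :=
    .of_bound hs.aestronglyMeasurable 1 (ae_of_all _ fun ω =>
      abs_le.2 ⟨by linarith [(hp01 (X ω) (Z ω)).1], (hp01 (X ω) (Z ω)).2⟩)
  have hD : Measurable fun ω => dstar (X ω) (Z ω) :=
    measurable_comp_of_measurable_slices (fun z => by
      simp_rw [hdstar]; exact Measurable.ite (measurableSet_le measurable_const (hp z))
        measurable_const measurable_const) hX hZ
  have hD01 : ∀ ω, dstar (X ω) (Z ω) = 0 ∨ dstar (X ω) (Z ω) = 1 := fun ω => by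
    rw [hdstar]; split_ifs <;> simp
  have hD' := measurable_comp_of_measurable_slices hd'meas hX hZ
  have hD'01 : ∀ ω, d' (X ω) (Z ω) = 0 ∨ d' (X ω) (Z ω) = 1 := fun ω => hd'01 (X ω) (Z ω)
  have hgap := integral_zero_one_mul_sub_eq_integral_sub_mul hD hD01 hD' hD'01 hZ hrates hsi t
    (1 / 2)
  have hgap_nonneg : 0 ≤ fun ω =>
      (dstar (X ω) (Z ω) - d' (X ω) (Z ω)) * (p (X ω) (Z ω) - t (Z ω)) := fun ω => by
    dsimp only [Pi.zero_apply]; rw [hdstar]; exact threshold_sub_mul_nonneg (hD'01 ω)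
  refine ⟨?_, hgap ▸ integral_nonneg hgap_nonneg, ?_⟩
  · rw [integral_mul_sub_integral_mul_eq_setIntegral_sub
      (h := fun ω => p (X ω) (Z ω) - 1 / 2) (hsi.sub (integrable_const _)) hD hD01 hD' hD'01]
    exact setIntegral_sub_setIntegral_eq_div_sub_div_mul
      (measureReal_one_zero_eq_measureReal_zero_one hD hD01 hD' hD'01 hZ hrates) _
  · rw [← sub_eq_zero, hgap, integral_eq_zero_iff_of_nonneg hgap_nonneg
      (integrable_zero_one_sub_mul (h := fun ω => p (X ω) (Z ω) - t (Z ω))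
        (hsi.sub (integrable_comp_of_finite hZ t)) hD hD01 hD' hD'01),
      ae_sub_mul_eq_zero_iff (ae_sub_comp_ne_zero hatomless t)]

/-- For the per-group-threshold rule `d*` and any other rule
`d'` with the same group-wise positive rates,
`u(d*,1/2) − u(d',1/2) = (E[p−1/2 | d*=1,d'=0] − E[p−1/2 | d*=0,d'=1])·P(d*=1,d'=0) ≥ 0`,
with equality iff `P(d* ≠ d') = 0`. -/
theorem threshold_vs_other_rule_utility_gap
    {Ω 𝒳 : Type*} [MeasurableSpace Ω] [MeasurableSpace 𝒳]
    (μ : Measure Ω) [IsProbabilityMeasure μ]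
    (X : Ω → 𝒳) (Z : Ω → Bool)
    (hX : Measurable X) (hZ : Measurable Z)
    (p : 𝒳 → Bool → ℝ) (hp : ∀ z, Measurable fun x => p x z)
    (hp01 : ∀ x z, p x z ∈ Set.Icc (0 : ℝ) 1)
    (hZpos : ∀ z, 0 < (μ {ω | Z ω = z}).toReal)
    (hatomless : ∀ z r, μ ({ω | p (X ω) (Z ω) = r} ∩ {ω | Z ω = z}) = 0)
    (t : Bool → ℝ)
    (dstar : 𝒳 → Bool → ℝ)
    (hdstar : ∀ x z, dstar x z = if t z ≤ p x z then 1 else 0)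
    (d' : 𝒳 → Bool → ℝ)
    (hd'01 : ∀ x z, d' x z = 0 ∨ d' x z = 1)
    (hd'meas : ∀ z, Measurable fun x => d' x z)
    -- d' achieves the same group-wise positive rates as d*
    (hrates : ∀ z,
      (μ ({ω | d' (X ω) (Z ω) = 1} ∩ {ω | Z ω = z})).toReal
        = (μ ({ω | dstar (X ω) (Z ω) = 1} ∩ {ω | Z ω = z})).toReal) :
    (∫ ω, dstar (X ω) (Z ω) * (p (X ω) (Z ω) - 1 / 2) ∂μ)
      - (∫ ω, d' (X ω) (Z ω) * (p (X ω) (Z ω) - 1 / 2) ∂μ)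
    = (((∫ ω in {ω | dstar (X ω) (Z ω) = 1 ∧ d' (X ω) (Z ω) = 0},
          (p (X ω) (Z ω) - 1 / 2) ∂μ)
        / (μ {ω | dstar (X ω) (Z ω) = 1 ∧ d' (X ω) (Z ω) = 0}).toReal)
      - ((∫ ω in {ω | dstar (X ω) (Z ω) = 0 ∧ d' (X ω) (Z ω) = 1},
          (p (X ω) (Z ω) - 1 / 2) ∂μ)
        / (μ {ω | dstar (X ω) (Z ω) = 0 ∧ d' (X ω) (Z ω) = 1}).toReal))
      * (μ {ω | dstar (X ω) (Z ω) = 1 ∧ d' (X ω) (Z ω) = 0}).toReal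
    ∧ 0 ≤ (∫ ω, dstar (X ω) (Z ω) * (p (X ω) (Z ω) - 1 / 2) ∂μ)
          - (∫ ω, d' (X ω) (Z ω) * (p (X ω) (Z ω) - 1 / 2) ∂μ)
    ∧ ((∫ ω, dstar (X ω) (Z ω) * (p (X ω) (Z ω) - 1 / 2) ∂μ)
          = (∫ ω, d' (X ω) (Z ω) * (p (X ω) (Z ω) - 1 / 2) ∂μ)
        ↔ μ {ω | dstar (X ω) (Z ω) ≠ d' (X ω) (Z ω)} = 0) :=
  threshold_vs_other_rule_utility_gap_general μ X Z hX hZ p hp hp01 hatomless t dstar hdstar d'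
    hd'01 hd'meas hrates
end

section
/- If d* is a per-group-threshold rule with thresholds t_a, t_b and d' is any rule with the same group-wise positive rates, then p(X,Z) restricted to the event {d*=1, d'=0} is almost surely at least t_z within each group z, while p(X,Z) restricted to {d*=0, d'=1} is almost surely at most t_z within each group; hence E[p(X,Z) | d*=1, d'=0, Z=z] ≥ E[p(X,Z) | d*=0, d'=1, Z=z] whenever both events have positive probability. -/
open MeasureTheory

/-!
In group `z`, pointwise `p ≥ t z` wherever `d* = 1` and `p ≤ t z` wherever `d* = 0`, so the
constant `t z` separates the set averages of `p` over the two swap regions.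
-/

lemma Measurable.comp_of_countable_right {α β γ δ : Type*} [MeasurableSpace α]
    [MeasurableSpace β] [MeasurableSpace γ] [MeasurableSpace δ] [Countable γ]
    [MeasurableSingletonClass γ] {f : β → γ → δ} (hf : ∀ c, Measurable fun b => f b c)
    {X : α → β} {Z : α → γ} (hX : Measurable X) (hZ : Measurable Z) :
    Measurable fun a => f (X a) (Z a) :=
  (measurable_from_prod_countable_left (f := Function.uncurry f) hf).comp (hX.prodMk hZ)

section SetAverage

variable {α : Type*} [MeasurableSpace α] {μ : Measure α} {f : α → ℝ} {s : Set α} {c : ℝ}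

lemma le_setAverage_of_const_le (hs : MeasurableSet s) (hs₀ : μ s ≠ 0) (hs₁ : μ s ≠ ⊤)
    (hf : IntegrableOn f s μ) (hc : ∀ x ∈ s, c ≤ f x) :
    c ≤ ⨍ x in s, f x ∂μ := by
  have hpos : 0 < μ.real s := ENNReal.toReal_pos hs₀ hs₁
  rw [setAverage_eq, smul_eq_mul, le_inv_mul_iff₀ hpos, mul_comm]
  exact setIntegral_ge_of_const_le_real hs hs₁ hc hf

lemma setAverage_le_of_le_const (hs : MeasurableSet s) (hs₀ : μ s ≠ 0) (hs₁ : μ s ≠ ⊤)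
    (hf : IntegrableOn f s μ) (hc : ∀ x ∈ s, f x ≤ c) :
    ⨍ x in s, f x ∂μ ≤ c := by
  have := le_setAverage_of_const_le hs hs₀ hs₁ (f := fun x => -f x) hf.neg fun x hx => neg_le_neg (hc x hx)
  rwa [average_neg, neg_le_neg_iff] at this

end SetAverage

theorem threshold_swap_regions_ordered_general
    {Ω 𝒳 : Type*} [MeasurableSpace Ω] [MeasurableSpace 𝒳]
    (μ : Measure Ω) [IsProbabilityMeasure μ]
    (X : Ω → 𝒳) (Z : Ω → Bool)
    (hX : Measurable X) (hZ : Measurable Z)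
    (p : 𝒳 → Bool → ℝ) (hp : ∀ z, Measurable fun x => p x z)
    (hp01 : ∀ x z, p x z ∈ Set.Icc (0 : ℝ) 1)
    (t : Bool → ℝ)
    (dstar : 𝒳 → Bool → ℝ)
    (hdstar : ∀ x z, dstar x z = if t z ≤ p x z then 1 else 0)
    (d' : 𝒳 → Bool → ℝ)
    (hd'meas : ∀ z, Measurable fun x => d' x z) :
    ∀ z : Bool,
      (∀ᵐ ω ∂μ, (dstar (X ω) (Z ω) = 1 ∧ d' (X ω) (Z ω) = 0 ∧ Z ω = z) →
        t z ≤ p (X ω) (Z ω)) ∧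
      (∀ᵐ ω ∂μ, (dstar (X ω) (Z ω) = 0 ∧ d' (X ω) (Z ω) = 1 ∧ Z ω = z) →
        p (X ω) (Z ω) ≤ t z) ∧
      (μ {ω | dstar (X ω) (Z ω) = 1 ∧ d' (X ω) (Z ω) = 0 ∧ Z ω = z} ≠ 0 →
       μ {ω | dstar (X ω) (Z ω) = 0 ∧ d' (X ω) (Z ω) = 1 ∧ Z ω = z} ≠ 0 →
        (∫ ω in {ω | dstar (X ω) (Z ω) = 0 ∧ d' (X ω) (Z ω) = 1 ∧ Z ω = z},
            p (X ω) (Z ω) ∂μ)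
          / (μ {ω | dstar (X ω) (Z ω) = 0 ∧ d' (X ω) (Z ω) = 1 ∧ Z ω = z}).toReal
        ≤ (∫ ω in {ω | dstar (X ω) (Z ω) = 1 ∧ d' (X ω) (Z ω) = 0 ∧ Z ω = z},
            p (X ω) (Z ω) ∂μ)
          / (μ {ω | dstar (X ω) (Z ω) = 1 ∧ d' (X ω) (Z ω) = 0 ∧ Z ω = z}).toReal) := by
  intro z
  have above : ∀ x z, dstar x z = 1 → t z ≤ p x z := fun x z h => by
    by_contra hlt
    simp [hdstar, hlt] at h
  have below : ∀ x z, dstar x z = 0 → p x z ≤ t z := fun x z h => by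
    by_contra hlt
    simp [hdstar, (not_le.mp hlt).le] at h
  set A := {ω | dstar (X ω) (Z ω) = 1 ∧ d' (X ω) (Z ω) = 0 ∧ Z ω = z}
  set B := {ω | dstar (X ω) (Z ω) = 0 ∧ d' (X ω) (Z ω) = 1 ∧ Z ω = z}
  have hA : ∀ ω ∈ A, t z ≤ p (X ω) (Z ω) := by
    rintro ω ⟨h, -, rfl⟩
    exact above _ _ h
  have hB : ∀ ω ∈ B, p (X ω) (Z ω) ≤ t z := by
    rintro ω ⟨h, -, rfl⟩
    exact below _ _ h
  refine ⟨ae_of_all _ hA, ae_of_all _ hB, fun hA₀ hB₀ => ?_⟩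
  have hdstar_meas : ∀ z, Measurable fun x => dstar x z := fun z => by
    simp_rw [hdstar]
    exact Measurable.ite (measurableSet_le measurable_const (hp z)) measurable_const
      measurable_const
  have hdsm := Measurable.comp_of_countable_right hdstar_meas hX hZ
  have hd'm := Measurable.comp_of_countable_right hd'meas hX hZ
  have hAm : MeasurableSet A := (hdsm (measurableSet_singleton 1)).inter
    ((hd'm (measurableSet_singleton 0)).inter (hZ (measurableSet_singleton z)))
  have hBm : MeasurableSet B := (hdsm (measurableSet_singleton 0)).inter
    ((hd'm (measurableSet_singleton 1)).inter (hZ (measurableSet_singleton z)))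
  have hint : Integrable (fun ω => p (X ω) (Z ω)) μ :=
    .of_bound (Measurable.comp_of_countable_right hp hX hZ).aestronglyMeasurable 1
      (ae_of_all _ fun ω => abs_le.mpr ⟨by linarith [(hp01 (X ω) (Z ω)).1],
        (hp01 (X ω) (Z ω)).2⟩)
  simp only [div_eq_inv_mul, ← measureReal_def, ← smul_eq_mul, ← setAverage_eq]
  exact (setAverage_le_of_le_const hBm hB₀ (measure_ne_top μ B) hint.integrableOn hB).trans
    (le_setAverage_of_const_le hAm hA₀ (measure_ne_top μ A) hint.integrableOn hA)

/-- For the per-group-threshold rule `d*` and any rule `d'`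
with the same group-wise positive rates: within each group `z`, on the event
`{d*=1, d'=0}` we have `p(X,Z) ≥ t z` a.s., on `{d*=0, d'=1}` we have
`p(X,Z) ≤ t z` a.s.; hence
`E[p | d*=1, d'=0, Z=z] ≥ E[p | d*=0, d'=1, Z=z]` whenever both events have
positive probability. -/
theorem threshold_swap_regions_ordered
    {Ω 𝒳 : Type*} [MeasurableSpace Ω] [MeasurableSpace 𝒳]
    (μ : Measure Ω) [IsProbabilityMeasure μ]
    (X : Ω → 𝒳) (Z : Ω → Bool)
    (hX : Measurable X) (hZ : Measurable Z)
    (p : 𝒳 → Bool → ℝ) (hp : ∀ z, Measurable fun x => p x z)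
    (hp01 : ∀ x z, p x z ∈ Set.Icc (0 : ℝ) 1)
    (hZpos : ∀ z, 0 < (μ {ω | Z ω = z}).toReal)
    (t : Bool → ℝ)
    (dstar : 𝒳 → Bool → ℝ)
    (hdstar : ∀ x z, dstar x z = if t z ≤ p x z then 1 else 0)
    (d' : 𝒳 → Bool → ℝ)
    (hd'01 : ∀ x z, d' x z = 0 ∨ d' x z = 1)
    (hd'meas : ∀ z, Measurable fun x => d' x z)
    (hrates : ∀ z,
      (μ ({ω | d' (X ω) (Z ω) = 1} ∩ {ω | Z ω = z})).toReal
        = (μ ({ω | dstar (X ω) (Z ω) = 1} ∩ {ω | Z ω = z})).toReal) :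
    ∀ z : Bool,
      (∀ᵐ ω ∂μ, (dstar (X ω) (Z ω) = 1 ∧ d' (X ω) (Z ω) = 0 ∧ Z ω = z) →
        t z ≤ p (X ω) (Z ω)) ∧
      (∀ᵐ ω ∂μ, (dstar (X ω) (Z ω) = 0 ∧ d' (X ω) (Z ω) = 1 ∧ Z ω = z) →
        p (X ω) (Z ω) ≤ t z) ∧
      (μ {ω | dstar (X ω) (Z ω) = 1 ∧ d' (X ω) (Z ω) = 0 ∧ Z ω = z} ≠ 0 →
       μ {ω | dstar (X ω) (Z ω) = 0 ∧ d' (X ω) (Z ω) = 1 ∧ Z ω = z} ≠ 0 →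
        (∫ ω in {ω | dstar (X ω) (Z ω) = 0 ∧ d' (X ω) (Z ω) = 1 ∧ Z ω = z},
            p (X ω) (Z ω) ∂μ)
          / (μ {ω | dstar (X ω) (Z ω) = 0 ∧ d' (X ω) (Z ω) = 1 ∧ Z ω = z}).toReal
        ≤ (∫ ω in {ω | dstar (X ω) (Z ω) = 1 ∧ d' (X ω) (Z ω) = 0 ∧ Z ω = z},
            p (X ω) (Z ω) ∂μ)
          / (μ {ω | dstar (X ω) (Z ω) = 1 ∧ d' (X ω) (Z ω) = 0 ∧ Z ω = z}).toReal) :=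
  threshold_swap_regions_ordered_general μ X Z hX hZ p hp hp01 t dstar hdstar d' hd'meas
end

section
/- Any decision rule d̃ : X → {0,1} depending only on X (not on Z) that satisfies a CV constraint q_a − q_b ≤ γ achieves immediate utility u(d̃, 1/2) at most that of the optimal per-group-threshold rule d* satisfying the same constraint with the same realized rates (q_a, q_b); i.e., group-blind rules are weakly dominated by per-group-threshold rules under impact-parity constraints. -/
open MeasureTheory

/-!
Within each group `z`, the threshold rule `d*` and the group-blind rule `d̃` select the same
mass `q z · P(Z = z)`. Hence `(t z - 1/2) ∫ (d* - d̃)` vanishes on the group, and what is left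
of `∫ (d* - d̃)(p - 1/2)` there is `∫ (d* - d̃)(p - t z)`, whose integrand is pointwise
nonnegative: `d* = 1 ≥ d̃` where `p ≥ t z` and `d* = 0 ≤ d̃` where `p < t z`.
Summing over the two groups gives the claim.
-/

section ThresholdRule

variable {Ω : Type*} [MeasurableSpace Ω] {ν : Measure Ω} {f s : Ω → ℝ}

lemma threshold_sub_mul_sub_nonneg_s6 {s t d : ℝ} (hd : d ∈ Set.Icc (0 : ℝ) 1) :
    0 ≤ ((if t ≤ s then 1 else 0) - d) * (s - t) := by
  split_ifs with h
  · exact mul_nonneg (by linarith [hd.2]) (by linarith)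
  · exact mul_nonneg_of_nonpos_of_nonpos (by linarith [hd.1]) (by linarith)

lemma MeasureTheory.Integrable.mul_sub_const (hf : Integrable f ν)
    (hfs : Integrable (fun ω => f ω * s ω) ν) (c : ℝ) : Integrable (fun ω => f ω * (s ω - c)) ν :=
  (hfs.sub (hf.mul_const c)).congr (ae_of_all _ fun _ => (mul_sub _ _ _).symm)

lemma integral_mul_sub_const (hf : Integrable f ν) (hfs : Integrable (fun ω => f ω * s ω) ν)
    (c : ℝ) : ∫ ω, f ω * (s ω - c) ∂ν = ∫ ω, f ω * s ω ∂ν - c * ∫ ω, f ω ∂ν := by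
  simp only [mul_sub]
  rw [integral_sub hfs (hf.mul_const c), integral_mul_const, mul_comm]

/-- Bathtub principle. -/
theorem integral_mul_sub_le_of_threshold {d dstar : Ω → ℝ} {t : ℝ}
    (hd : ∀ᵐ ω ∂ν, d ω ∈ Set.Icc 0 1)
    (hstar : ∀ᵐ ω ∂ν, dstar ω = if t ≤ s ω then 1 else 0)
    (hd_int : Integrable d ν) (hstar_int : Integrable dstar ν)
    (hds_int : Integrable (fun ω => d ω * s ω) ν)
    (hstars_int : Integrable (fun ω => dstar ω * s ω) ν)
    (hmass : ∫ ω, d ω ∂ν = ∫ ω, dstar ω ∂ν) (c : ℝ) :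
    ∫ ω, d ω * (s ω - c) ∂ν ≤ ∫ ω, dstar ω * (s ω - c) ∂ν := by
  have hgap : 0 ≤ ∫ ω, (dstar ω - d ω) * (s ω - t) ∂ν := by
    refine integral_nonneg_of_ae ?_
    filter_upwards [hd, hstar] with ω hdω hstarω
    rw [hstarω]
    exact threshold_sub_mul_sub_nonneg_s6 hdω
  simp only [sub_mul] at hgap
  rw [integral_sub (hstar_int.mul_sub_const hstars_int t) (hd_int.mul_sub_const hds_int t),
    integral_mul_sub_const hd_int hds_int, integral_mul_sub_const hstar_int hstars_int,
    hmass] at hgap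
  rw [integral_mul_sub_const hd_int hds_int, integral_mul_sub_const hstar_int hstars_int, hmass]
  linarith

lemma MeasureTheory.Integrable.mul_of_mem_Icc [IsFiniteMeasure ν] {g : Ω → ℝ}
    (hf : Measurable f) (hg : Measurable g) (hf01 : ∀ ω, f ω ∈ Set.Icc (0 : ℝ) 1)
    (hg01 : ∀ ω, g ω ∈ Set.Icc (0 : ℝ) 1) : Integrable (fun ω => f ω * g ω) ν :=
  .of_mem_Icc 0 1 (hf.mul hg).aemeasurable
    (ae_of_all _ fun ω => unitInterval.mul_mem (hf01 ω) (hg01 ω))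

end ThresholdRule

section ZeroOneRule

variable {Ω : Type*} [MeasurableSpace Ω] {μ : Measure Ω} {f g : Ω → ℝ} {S : Set Ω}

lemma setIntegral_eq_measureReal_of_zero_one (hf : Measurable f)
    (h01 : ∀ ω, f ω = 0 ∨ f ω = 1) : ∫ ω in S, f ω ∂μ = μ.real ({ω | f ω = 1} ∩ S) := by
  have hA : MeasurableSet {ω | f ω = 1} := hf (measurableSet_singleton 1)
  have hf_ind : f = {ω | f ω = 1}.indicator 1 := by
    funext ω
    rcases h01 ω with h | h <;> simp [h]
  calc ∫ ω in S, f ω ∂μ = ∫ ω in S, {ω | f ω = 1}.indicator 1 ω ∂μ := by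
        conv_lhs => rw [hf_ind]
    _ = μ.real ({ω | f ω = 1} ∩ S) := by
        rw [integral_indicator_one hA, measureReal_restrict_apply hA]

lemma setIntegral_eq_of_rate_eq (hf : Measurable f) (hf01 : ∀ ω, f ω = 0 ∨ f ω = 1)
    (hg : Measurable g) (hg01 : ∀ ω, g ω = 0 ∨ g ω = 1) (hS : (μ S).toReal ≠ 0)
    (hrate : (μ ({ω | f ω = 1} ∩ S)).toReal / (μ S).toReal
      = (μ ({ω | g ω = 1} ∩ S)).toReal / (μ S).toReal) :
    ∫ ω in S, f ω ∂μ = ∫ ω in S, g ω ∂μ := by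
  rw [setIntegral_eq_measureReal_of_zero_one hf hf01,
    setIntegral_eq_measureReal_of_zero_one hg hg01, measureReal_def, measureReal_def]
  exact (div_left_inj' hS).mp hrate

lemma mem_Icc_of_eq_zero_or_eq_one {a : ℝ} (h : a = 0 ∨ a = 1) : a ∈ Set.Icc (0 : ℝ) 1 := by
  rcases h with rfl | rfl <;> simp

end ZeroOneRule

lemma measurable_apply_comp_of_countable {Ω 𝒳 β : Type*} [MeasurableSpace Ω]
    [MeasurableSpace 𝒳] [MeasurableSpace β] [Countable β] [MeasurableSingletonClass β]
    {X : Ω → 𝒳} {Z : Ω → β} {g : 𝒳 → β → ℝ} (hX : Measurable X) (hZ : Measurable Z)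
    (hg : ∀ z, Measurable fun x => g x z) : Measurable fun ω => g (X ω) (Z ω) :=
  (measurable_from_prod_countable_left (f := fun xz => g xz.1 xz.2) hg).comp (hX.prodMk hZ)

theorem group_blind_dominated_by_threshold_general
    {Ω 𝒳 : Type*} [MeasurableSpace Ω] [MeasurableSpace 𝒳]
    (μ : Measure Ω) [IsProbabilityMeasure μ]
    (X : Ω → 𝒳) (Z : Ω → Bool)
    (hX : Measurable X) (hZ : Measurable Z)
    (p : 𝒳 → Bool → ℝ) (hp : ∀ z, Measurable fun x => p x z)
    (hp01 : ∀ x z, p x z ∈ Set.Icc (0 : ℝ) 1)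
    (hZpos : ∀ z, 0 < (μ {ω | Z ω = z}).toReal)
    (dblind : 𝒳 → ℝ)
    (hblind01 : ∀ x, dblind x = 0 ∨ dblind x = 1)
    (hblindmeas : Measurable dblind)
    (q : Bool → ℝ)
    -- realized group-wise rates of the group-blind rule
    (hqrates : ∀ z, (μ ({ω | dblind (X ω) = 1} ∩ {ω | Z ω = z})).toReal
        / (μ {ω | Z ω = z}).toReal = q z)
    (t : Bool → ℝ)
    (dstar : 𝒳 → Bool → ℝ)
    (hdstar : ∀ x z, dstar x z = if t z ≤ p x z then 1 else 0)
    -- d* is the per-group-threshold rule realizing the same rates (q_a, q_b)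
    (hstarrates : ∀ z, (μ ({ω | dstar (X ω) (Z ω) = 1} ∩ {ω | Z ω = z})).toReal
        / (μ {ω | Z ω = z}).toReal = q z) :
    ∫ ω, dblind (X ω) * (p (X ω) (Z ω) - 1 / 2) ∂μ
      ≤ ∫ ω, dstar (X ω) (Z ω) * (p (X ω) (Z ω) - 1 / 2) ∂μ := by
  set S : Bool → Set Ω := fun z => {ω | Z ω = z}
  have hS : ∀ z, MeasurableSet (S z) := fun z => hZ (measurableSet_singleton z)
  have hP : Measurable fun ω => p (X ω) (Z ω) := measurable_apply_comp_of_countable hX hZ hp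
  have hB : Measurable fun ω => dblind (X ω) := hblindmeas.comp hX
  have hD : Measurable fun ω => dstar (X ω) (Z ω) :=
    measurable_apply_comp_of_countable hX hZ fun z => by
      simp only [hdstar]
      exact Measurable.ite (measurableSet_le measurable_const (hp z)) measurable_const
        measurable_const
  have hB01 : ∀ ω, dblind (X ω) = 0 ∨ dblind (X ω) = 1 := fun ω => hblind01 (X ω)
  have hD01 : ∀ ω, dstar (X ω) (Z ω) = 0 ∨ dstar (X ω) (Z ω) = 1 := fun ω => by
    rw [hdstar]; split_ifs <;> simp
  have hBIcc := fun ω => mem_Icc_of_eq_zero_or_eq_one (hB01 ω)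
  have hDIcc := fun ω => mem_Icc_of_eq_zero_or_eq_one (hD01 ω)
  have hB_int : Integrable _ μ := .of_mem_Icc 0 1 hB.aemeasurable (ae_of_all _ hBIcc)
  have hD_int : Integrable _ μ := .of_mem_Icc 0 1 hD.aemeasurable (ae_of_all _ hDIcc)
  have hBP_int := Integrable.mul_of_mem_Icc (ν := μ) hB hP hBIcc fun _ => hp01 _ _
  have hDP_int := Integrable.mul_of_mem_Icc (ν := μ) hD hP hDIcc fun _ => hp01 _ _
  have hgroup : ∀ z, ∫ ω in S z, dblind (X ω) * (p (X ω) (Z ω) - 1 / 2) ∂μ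
      ≤ ∫ ω in S z, dstar (X ω) (Z ω) * (p (X ω) (Z ω) - 1 / 2) ∂μ := fun z =>
    integral_mul_sub_le_of_threshold (ae_of_all _ hBIcc)
      ((ae_restrict_mem (hS z)).mono fun ω (hω : Z ω = z) => by rw [hdstar, hω])
      hB_int.restrict hD_int.restrict hBP_int.restrict hDP_int.restrict
      (setIntegral_eq_of_rate_eq hB hB01 hD hD01 (hZpos z).ne'
        ((hqrates z).trans (hstarrates z).symm)) _
  have hcompl : (S true)ᶜ = S false := by ext ω; simp [S]
  rw [← integral_add_compl (hS true) (hB_int.mul_sub_const hBP_int _),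
    ← integral_add_compl (hS true) (hD_int.mul_sub_const hDP_int _), hcompl]
  exact add_le_add (hgroup true) (hgroup false)

/-- Any group-blind decision rule `d̃ : 𝒳 → {0,1}` (depending
only on `X`) satisfying the CV constraint `q_a − q_b ≤ γ` achieves immediate
utility at most that of the per-group-threshold rule `d*` realizing the same
group-wise rates `(q_a, q_b)` (groups `true = a`, `false = b`). -/
theorem group_blind_dominated_by_threshold
    {Ω 𝒳 : Type*} [MeasurableSpace Ω] [MeasurableSpace 𝒳]
    (μ : Measure Ω) [IsProbabilityMeasure μ]
    (X : Ω → 𝒳) (Z : Ω → Bool)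
    (hX : Measurable X) (hZ : Measurable Z)
    (p : 𝒳 → Bool → ℝ) (hp : ∀ z, Measurable fun x => p x z)
    (hp01 : ∀ x z, p x z ∈ Set.Icc (0 : ℝ) 1)
    (hZpos : ∀ z, 0 < (μ {ω | Z ω = z}).toReal)
    (hatomless : ∀ z r, μ ({ω | p (X ω) (Z ω) = r} ∩ {ω | Z ω = z}) = 0)
    (γ : ℝ)
    (dblind : 𝒳 → ℝ)
    (hblind01 : ∀ x, dblind x = 0 ∨ dblind x = 1)
    (hblindmeas : Measurable dblind)
    (q : Bool → ℝ)
    -- realized group-wise rates of the group-blind rule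
    (hqrates : ∀ z, (μ ({ω | dblind (X ω) = 1} ∩ {ω | Z ω = z})).toReal
        / (μ {ω | Z ω = z}).toReal = q z)
    -- CV (impact-parity) constraint satisfied by the group-blind rule
    (hCV : q true - q false ≤ γ)
    (t : Bool → ℝ)
    (dstar : 𝒳 → Bool → ℝ)
    (hdstar : ∀ x z, dstar x z = if t z ≤ p x z then 1 else 0)
    -- d* is the per-group-threshold rule realizing the same rates (q_a, q_b)
    (hstarrates : ∀ z, (μ ({ω | dstar (X ω) (Z ω) = 1} ∩ {ω | Z ω = z})).toReal
        / (μ {ω | Z ω = z}).toReal = q z) :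
    ∫ ω, dblind (X ω) * (p (X ω) (Z ω) - 1 / 2) ∂μ
      ≤ ∫ ω, dstar (X ω) (Z ω) * (p (X ω) (Z ω) - 1 / 2) ∂μ :=
  group_blind_dominated_by_threshold_general μ X Z hX hZ p hp hp01 hZpos dblind hblind01 hblindmeas
    q hqrates t dstar hdstar hstarrates
end

section
/- Suppose the unconstrained optimal rule d_uncon(x,z) = 1{p(x,z) ≥ 1/2} yields rates with CV gap q_a − q_b > γ. Then there exists a per-group-threshold rule d* with thresholds t_a ≥ 1/2 ≥ t_b achieving CV gap exactly γ, and among rules achieving CV gap at most γ with d ≥ d_uncon on group b and d ≤ d_uncon on group a (i.e., obtained from d_uncon only by flipping 0→1 in group b and 1→0 in group a), d* maximizes immediate utility u(d, 1/2). -/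
open MeasureTheory

/-- group-wise positive rate of a rule `d : 𝒳 → Bool → ℝ` within group `z` -/
noncomputable def qrate {Ω 𝒳 : Type*} [MeasurableSpace Ω] (μ : Measure Ω)
    (X : Ω → 𝒳) (Z : Ω → Bool) (d : 𝒳 → Bool → ℝ) (z : Bool) : ℝ :=
  (μ ({ω | d (X ω) (Z ω) = 1} ∩ {ω | Z ω = z})).toReal / (μ {ω | Z ω = z}).toReal


lemma meas_comp_bool {Ω 𝒳 : Type*} [MeasurableSpace Ω] [MeasurableSpace 𝒳]
    {X : Ω → 𝒳} {Z : Ω → Bool} (hX : Measurable X) (hZ : Measurable Z)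
    {d : 𝒳 → Bool → ℝ} (hd : ∀ z, Measurable fun x => d x z) :
    Measurable fun ω => d (X ω) (Z ω) := by
  have h : (fun ω => d (X ω) (Z ω))
      = fun ω => if Z ω = true then d (X ω) true else d (X ω) false := by
    funext ω; cases h : Z ω <;> simp [h]
  rw [h]
  exact Measurable.ite (hZ (measurableSet_singleton true)) ((hd true).comp hX)
    ((hd false).comp hX)

lemma integrable_of_bound {Ω : Type*} [MeasurableSpace Ω] (μ : Measure Ω)
    [IsProbabilityMeasure μ] (f : Ω → ℝ) (hf : Measurable f) (C : ℝ)
    (hbd : ∀ ω, |f ω| ≤ C) : Integrable f μ :=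
  ⟨hf.aestronglyMeasurable, HasFiniteIntegral.of_bounded (ae_of_all μ hbd)⟩

lemma int01 {Ω : Type*} [MeasurableSpace Ω] (μ : Measure Ω) [IsProbabilityMeasure μ]
    (g : Ω → ℝ) (hg : Measurable g) (h01 : ∀ ω, g ω = 0 ∨ g ω = 1)
    (s : Set Ω) (hs : MeasurableSet s) :
    ∫ ω in s, g ω ∂μ = (μ ({ω | g ω = 1} ∩ s)).toReal := by
  have hmg : MeasurableSet {ω | g ω = 1} := hg (measurableSet_singleton 1)
  have heq : ∀ ω, g ω = Set.indicator {ω | g ω = 1} (fun _ => (1:ℝ)) ω := by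
    intro ω
    rcases h01 ω with h | h <;> simp [Set.indicator, Set.mem_setOf_eq, h]
  calc ∫ ω in s, g ω ∂μ = ∫ ω in s, Set.indicator {ω | g ω = 1} (fun _ => (1:ℝ)) ω ∂μ := by
        exact setIntegral_congr_fun hs (fun ω _ => heq ω)
    _ = ∫ _ω in s ∩ {ω | g ω = 1}, (1:ℝ) ∂μ := setIntegral_indicator hmg
    _ = (μ (s ∩ {ω | g ω = 1})).toReal • (1:ℝ) := setIntegral_const 1
    _ = (μ ({ω | g ω = 1} ∩ s)).toReal := by rw [Set.inter_comm]; simp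

/-- If the unconstrained rule `d_uncon(x,z) = 1{p(x,z) ≥ 1/2}`
has CV gap `> γ`, there is a per-group-threshold rule `d*` with thresholds
`t_a ≥ 1/2 ≥ t_b` achieving CV gap exactly `γ`; and among all rules with CV gap
`≤ γ` obtained from `d_uncon` only by flipping `0→1` in group `b` and `1→0` in
group `a`, `d*` maximizes the immediate utility `u(d,1/2)`.
(Groups: `true = a`, `false = b`; `F z t = P(p(X,Z) ≥ t | Z=z)`.) -/
theorem constrained_optimum_is_threshold_rule
    {Ω 𝒳 : Type*} [MeasurableSpace Ω] [MeasurableSpace 𝒳]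
    (μ : Measure Ω) [IsProbabilityMeasure μ]
    (X : Ω → 𝒳) (Z : Ω → Bool)
    (hX : Measurable X) (hZ : Measurable Z)
    (p : 𝒳 → Bool → ℝ) (hp : ∀ z, Measurable fun x => p x z)
    (hp01 : ∀ x z, p x z ∈ Set.Icc (0 : ℝ) 1)
    (hZpos : ∀ z, 0 < (μ {ω | Z ω = z}).toReal)
    (F : Bool → ℝ → ℝ)
    (hF : ∀ z t, F z t = (μ ({ω | t ≤ p (X ω) (Z ω)} ∩ {ω | Z ω = z})).toReal
        / (μ {ω | Z ω = z}).toReal)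
    -- continuous positive-density distribution of p within each group
    (hFcont : ∀ z, Continuous (F z))
    (hFanti : ∀ z, StrictAntiOn (F z) (Set.Icc 0 1))
    (hF0 : ∀ z, F z 0 = 1) (hF1 : ∀ z, ∀ t > 1, F z t = 0)
    (γ : ℝ) (hγ : 0 ≤ γ)
    -- CV gap of the unconstrained rule exceeds γ
    (hgap : γ < F true (1 / 2) - F false (1 / 2)) :
    ∃ ta tb : ℝ, 1 / 2 ≤ ta ∧ tb ≤ 1 / 2 ∧
      (∀ dstar : 𝒳 → Bool → ℝ,
        (∀ x, dstar x true = if ta ≤ p x true then 1 else 0) →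
        (∀ x, dstar x false = if tb ≤ p x false then 1 else 0) →
        -- d* achieves CV gap exactly γ
        (qrate μ X Z dstar true - qrate μ X Z dstar false = γ) ∧
        -- d* is optimal among admissible flip-rules with CV gap ≤ γ
        (∀ d : 𝒳 → Bool → ℝ,
          (∀ x z, d x z = 0 ∨ d x z = 1) →
          (∀ z, Measurable fun x => d x z) →
          -- only 0→1 flips in group b: d ≥ d_uncon on group b
          (∀ x, 1 / 2 ≤ p x false → d x false = 1) →
          -- only 1→0 flips in group a: d ≤ d_uncon on group a
          (∀ x, p x true < 1 / 2 → d x true = 0) →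
          qrate μ X Z d true - qrate μ X Z d false ≤ γ →
          ∫ ω, d (X ω) (Z ω) * (p (X ω) (Z ω) - 1 / 2) ∂μ
            ≤ ∫ ω, dstar (X ω) (Z ω) * (p (X ω) (Z ω) - 1 / 2) ∂μ)) := by
  classical
  have hPa : 0 < (μ {ω | Z ω = true}).toReal := hZpos true
  have hPb : 0 < (μ {ω | Z ω = false}).toReal := hZpos false
  set Pa := (μ {ω | Z ω = true}).toReal with hPadef
  set Pb := (μ {ω | Z ω = false}).toReal with hPbdef
  -- F z t = 1 for t ≤ 0
  have hFle0 : ∀ z : Bool, ∀ t : ℝ, t ≤ 0 → F z t = 1 := by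
    intro z t ht
    rw [hF]
    have hset : {ω | t ≤ p (X ω) (Z ω)} = Set.univ := by
      ext ω
      simp only [Set.mem_setOf_eq, Set.mem_univ, iff_true]
      exact ht.trans (hp01 _ _).1
    rw [hset, Set.univ_inter, div_self (hZpos z).ne']
  -- IVT to find the multiplier l
  obtain ⟨l, hl0, hlγ⟩ :
      ∃ l : ℝ, 0 ≤ l ∧ F true (1/2 + l/Pa) - F false (1/2 - l/Pb) = γ := by
    set φ : ℝ → ℝ := fun l => F true (1/2 + l/Pa) - F false (1/2 - l/Pb) with hφdef
    have hφcont : Continuous φ := by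
      apply Continuous.sub
      · exact (hFcont true).comp (continuous_const.add (continuous_id.div_const Pa))
      · exact (hFcont false).comp (continuous_const.sub (continuous_id.div_const Pb))
    have hL : (0:ℝ) ≤ Pa + Pb := by linarith
    have hφL : φ (Pa + Pb) = -1 := by
      have h1 : F true (1/2 + (Pa+Pb)/Pa) = 0 := by
        apply hF1
        have : (1:ℝ) ≤ (Pa+Pb)/Pa := (one_le_div hPa).mpr (by linarith)
        linarith
      have h2 : F false (1/2 - (Pa+Pb)/Pb) = 1 := by
        apply hFle0
        have : (1:ℝ) ≤ (Pa+Pb)/Pb := (one_le_div hPb).mpr (by linarith)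
        linarith
      simp only [hφdef, h1, h2]; ring
    have hφ0 : γ ≤ φ 0 := by
      have : φ 0 = F true (1/2) - F false (1/2) := by
        simp only [hφdef, zero_div, add_zero, sub_zero]
      rw [this]
      norm_num at hgap ⊢
      linarith
    have hmem : γ ∈ Set.Icc (φ (Pa+Pb)) (φ 0) := ⟨by rw [hφL]; linarith, hφ0⟩
    obtain ⟨l, hlmem, hlval⟩ := intermediate_value_Icc' hL hφcont.continuousOn hmem
    exact ⟨l, hlmem.1, hlval⟩
  set ta : ℝ := 1/2 + l/Pa with htadef
  set tb : ℝ := 1/2 - l/Pb with htbdef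
  have hta2 : 1/2 ≤ ta := by
    have := div_nonneg hl0 hPa.le; rw [htadef]; linarith
  have htb2 : tb ≤ 1/2 := by
    have := div_nonneg hl0 hPb.le; rw [htbdef]; linarith
  refine ⟨ta, tb, hta2, htb2, ?_⟩
  intro dstar hda hdb
  -- qrate of dstar equals F at the threshold
  have hq : ∀ (z : Bool) (t : ℝ), (∀ x, dstar x z = if t ≤ p x z then (1:ℝ) else 0) →
      qrate μ X Z dstar z = F z t := by
    intro z t hdz
    have hsets : {ω | dstar (X ω) (Z ω) = 1} ∩ {ω | Z ω = z}
        = {ω | t ≤ p (X ω) (Z ω)} ∩ {ω | Z ω = z} := by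
      ext ω
      simp only [Set.mem_inter_iff, Set.mem_setOf_eq]
      constructor
      · rintro ⟨h1, h2⟩
        refine ⟨?_, h2⟩
        rw [h2, hdz] at h1
        rw [h2]
        by_contra hle
        rw [if_neg hle] at h1
        norm_num at h1
      · rintro ⟨h1, h2⟩
        refine ⟨?_, h2⟩
        rw [h2] at h1 ⊢
        rw [hdz, if_pos h1]
    rw [qrate, hsets, hF]
  have hqa : qrate μ X Z dstar true = F true ta := hq true ta hda
  have hqb : qrate μ X Z dstar false = F false tb := hq false tb hdb
  have hqgap : qrate μ X Z dstar true - qrate μ X Z dstar false = γ := by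
    rw [hqa, hqb]; exact hlγ
  refine ⟨hqgap, ?_⟩
  intro d hd01 hdmeas _ _ hgapd
  -- abbreviations
  set Dd : Ω → ℝ := fun ω => d (X ω) (Z ω) with hDddef
  set Ds : Ω → ℝ := fun ω => dstar (X ω) (Z ω) with hDsdef
  set P : Ω → ℝ := fun ω => p (X ω) (Z ω) with hPdef
  set T : Ω → ℝ := fun ω => if Z ω = true then ta else tb with hTdef
  have hdsmeas : ∀ z, Measurable fun x => dstar x z := by
    intro z
    cases z
    · simp only [hdb]
      exact Measurable.ite (measurableSet_le measurable_const (hp false))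
        measurable_const measurable_const
    · simp only [hda]
      exact Measurable.ite (measurableSet_le measurable_const (hp true))
        measurable_const measurable_const
  have hDdm : Measurable Dd := meas_comp_bool hX hZ hdmeas
  have hDsm : Measurable Ds := meas_comp_bool hX hZ hdsmeas
  have hPm : Measurable P := meas_comp_bool hX hZ hp
  have hTm : Measurable T :=
    Measurable.ite (hZ (measurableSet_singleton true)) measurable_const measurable_const
  have hDd01 : ∀ ω, Dd ω = 0 ∨ Dd ω = 1 := fun ω => hd01 _ _
  have hDsval : ∀ ω, Ds ω = if T ω ≤ P ω then (1:ℝ) else 0 := by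
    intro ω
    show dstar (X ω) (Z ω) = _
    cases hzz : Z ω
    · have hT : T ω = tb := by simp [hTdef, hzz]
      have hPω : P ω = p (X ω) false := by simp [hPdef, hzz]
      rw [hdb, hT, hPω]
    · have hT : T ω = ta := by simp [hTdef, hzz]
      have hPω : P ω = p (X ω) true := by simp [hPdef, hzz]
      rw [hda, hT, hPω]
  have hDs01 : ∀ ω, Ds ω = 0 ∨ Ds ω = 1 := by
    intro ω; rw [hDsval ω]; split_ifs <;> simp
  have habs : ∀ x : ℝ, x = 0 ∨ x = 1 → |x| ≤ 1 := by rintro x (rfl | rfl) <;> norm_num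
  have hPbd : ∀ ω, |P ω - 1/2| ≤ 1 := by
    intro ω
    have h := hp01 (X ω) (Z ω)
    have hPω : P ω = p (X ω) (Z ω) := rfl
    rw [hPω, abs_le]
    exact ⟨by linarith [h.1], by linarith [h.2]⟩
  -- integrability
  have hiDd : Integrable Dd μ := integrable_of_bound μ Dd hDdm 1 (fun ω => habs _ (hDd01 ω))
  have hiDs : Integrable Ds μ := integrable_of_bound μ Ds hDsm 1 (fun ω => habs _ (hDs01 ω))
  have hiDdP : Integrable (fun ω => Dd ω * (P ω - 1/2)) μ :=
    integrable_of_bound μ _ (hDdm.mul (hPm.sub measurable_const)) 1 (by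
      intro ω
      rw [abs_mul]
      calc |Dd ω| * |P ω - 1/2| ≤ 1 * 1 :=
            mul_le_mul (habs _ (hDd01 ω)) (hPbd ω) (abs_nonneg _) one_pos.le
        _ = 1 := one_mul 1)
  have hiDsP : Integrable (fun ω => Ds ω * (P ω - 1/2)) μ :=
    integrable_of_bound μ _ (hDsm.mul (hPm.sub measurable_const)) 1 (by
      intro ω
      rw [abs_mul]
      calc |Ds ω| * |P ω - 1/2| ≤ 1 * 1 :=
            mul_le_mul (habs _ (hDs01 ω)) (hPbd ω) (abs_nonneg _) one_pos.le
        _ = 1 := one_mul 1)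
  have hiDiff : Integrable (fun ω => (Dd ω - Ds ω) * (P ω - 1/2)) μ := by
    have h : (fun ω => (Dd ω - Ds ω) * (P ω - 1/2))
        = fun ω => Dd ω * (P ω - 1/2) - Ds ω * (P ω - 1/2) := by funext ω; ring
    rw [h]; exact hiDdP.sub hiDsP
  have hTbd : ∀ ω, |T ω - 1/2| ≤ |ta - 1/2| + |tb - 1/2| := by
    intro ω
    have hT' : T ω = ta ∨ T ω = tb := by
      by_cases hzz : Z ω = true <;> simp [hTdef, hzz]
    rcases hT' with h | h <;> rw [h]
    · linarith [abs_nonneg (tb - 1/2)]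
    · linarith [abs_nonneg (ta - 1/2)]
  have hiW : Integrable (fun ω => (T ω - 1/2) * (Dd ω - Ds ω)) μ :=
    integrable_of_bound μ _ ((hTm.sub measurable_const).mul (hDdm.sub hDsm))
      ((|ta - 1/2| + |tb - 1/2|) * 2) (by
      intro ω
      rw [abs_mul]
      have h2 : |Dd ω - Ds ω| ≤ 2 := by
        rcases hDd01 ω with h | h <;> rcases hDs01 ω with h' | h' <;> rw [h, h'] <;> norm_num
      exact mul_le_mul (hTbd ω) h2 (abs_nonneg _) (by positivity))
  -- the pointwise comparison
  have hptw : ∀ ω, (Dd ω - Ds ω) * (P ω - 1/2) ≤ (T ω - 1/2) * (Dd ω - Ds ω) := by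
    intro ω
    have hds := hDsval ω
    by_cases ht : T ω ≤ P ω
    · rw [if_pos ht] at hds
      rcases hDd01 ω with h | h <;> rw [h, hds] <;> nlinarith
    · rw [if_neg ht] at hds
      push_neg at ht
      rcases hDd01 ω with h | h <;> rw [h, hds] <;> nlinarith
  have step1 : ∫ ω, (Dd ω - Ds ω) * (P ω - 1/2) ∂μ
      ≤ ∫ ω, (T ω - 1/2) * (Dd ω - Ds ω) ∂μ := integral_mono hiDiff hiW hptw
  -- split into groups
  have hsA : MeasurableSet {ω | Z ω = true} := hZ (measurableSet_singleton true)
  have hsB : MeasurableSet {ω | Z ω = false} := hZ (measurableSet_singleton false)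
  have hcompl : {ω | Z ω = true}ᶜ = {ω | Z ω = false} := by
    ext ω; simp [Bool.not_eq_true]
  have hsplitW : ∫ ω, (T ω - 1/2) * (Dd ω - Ds ω) ∂μ
      = (∫ ω in {ω | Z ω = true}, (T ω - 1/2) * (Dd ω - Ds ω) ∂μ)
        + ∫ ω in {ω | Z ω = false}, (T ω - 1/2) * (Dd ω - Ds ω) ∂μ := by
    rw [← hcompl]
    exact (integral_add_compl hsA hiW).symm
  set A := (μ ({ω | Dd ω = 1} ∩ {ω | Z ω = true})).toReal with hAdef
  set As := (μ ({ω | Ds ω = 1} ∩ {ω | Z ω = true})).toReal with hAsdef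
  set B := (μ ({ω | Dd ω = 1} ∩ {ω | Z ω = false})).toReal with hBdef
  set Bs := (μ ({ω | Ds ω = 1} ∩ {ω | Z ω = false})).toReal with hBsdef
  have hA : ∫ ω in {ω | Z ω = true}, (T ω - 1/2) * (Dd ω - Ds ω) ∂μ
      = (ta - 1/2) * (A - As) := by
    have hconst : ∀ ω ∈ {ω | Z ω = true},
        (T ω - 1/2) * (Dd ω - Ds ω) = (ta - 1/2) * (Dd ω - Ds ω) := by
      intro ω hω
      simp only [Set.mem_setOf_eq] at hω
      simp [hTdef, hω]
    rw [setIntegral_congr_fun hsA hconst, integral_const_mul]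
    congr 1
    rw [integral_sub hiDd.integrableOn hiDs.integrableOn,
      int01 μ Dd hDdm hDd01 _ hsA, int01 μ Ds hDsm hDs01 _ hsA]
  have hB : ∫ ω in {ω | Z ω = false}, (T ω - 1/2) * (Dd ω - Ds ω) ∂μ
      = (tb - 1/2) * (B - Bs) := by
    have hconst : ∀ ω ∈ {ω | Z ω = false},
        (T ω - 1/2) * (Dd ω - Ds ω) = (tb - 1/2) * (Dd ω - Ds ω) := by
      intro ω hω
      simp only [Set.mem_setOf_eq] at hω
      simp [hTdef, hω]
    rw [setIntegral_congr_fun hsB hconst, integral_const_mul]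
    congr 1
    rw [integral_sub hiDd.integrableOn hiDs.integrableOn,
      int01 μ Dd hDdm hDd01 _ hsB, int01 μ Ds hDsm hDs01 _ hsB]
  -- rates in terms of the masses
  have hqdA : qrate μ X Z d true = A / Pa := rfl
  have hqdB : qrate μ X Z d false = B / Pb := rfl
  have hqsA : qrate μ X Z dstar true = As / Pa := rfl
  have hqsB : qrate μ X Z dstar false = Bs / Pb := rfl
  rw [hqdA, hqdB] at hgapd
  rw [hqsA, hqsB] at hqgap
  -- the multiplier identities
  have hlenA : ta - 1/2 = l / Pa := by rw [htadef]; ring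
  have hlenB : tb - 1/2 = -(l / Pb) := by rw [htbdef]; ring
  have key : (ta - 1/2) * (A - As) + (tb - 1/2) * (B - Bs)
      = l * ((A/Pa - B/Pb) - (As/Pa - Bs/Pb)) := by
    rw [hlenA, hlenB]
    field_simp
    ring
  have hfin : l * ((A/Pa - B/Pb) - (As/Pa - Bs/Pb)) ≤ 0 :=
    mul_nonpos_of_nonneg_of_nonpos hl0 (by linarith)
  have hsub : ∫ ω, (Dd ω - Ds ω) * (P ω - 1/2) ∂μ
      = (∫ ω, Dd ω * (P ω - 1/2) ∂μ) - ∫ ω, Ds ω * (P ω - 1/2) ∂μ := by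
    rw [← integral_sub hiDdP hiDsP]
    congr 1
    funext ω
    ring
  show ∫ ω, Dd ω * (P ω - 1/2) ∂μ ≤ ∫ ω, Ds ω * (P ω - 1/2) ∂μ
  rw [hsub, hsplitW, hA, hB] at step1
  linarith
end

section
/- Under a 'do no harm' constraint requiring d(x, b) ≥ d_uncon(x, b) for all x in the disadvantaged group b (equivalently requiring q_b ≥ q_b^uncon), the utility-optimal rule satisfying a CV constraint is still a per-group-threshold rule, with the constraint only imposing the upper bound t_b ≤ 1/2 on the group-b threshold. -/
/-!
Lagrangian relaxation of the CV constraint. For a multiplier `η ≥ 0` put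
`t_a = 1/2 + η / P(Z = a)` and `t_b = 1/2 - η / P(Z = b)`; then for every rule
`E[d (p - 1/2)] - η (q_a - q_b) = E[d (p - t_Z)]`, and the right side is maximised pointwise by
the threshold rule `1{p ≥ t_Z}`. Taking `η = 0` when the unconstrained rule meets the CV
constraint, and otherwise (intermediate value theorem) an `η` at which the constraint binds,
complementary slackness makes this rule optimal even without the do-no-harm constraint, and it
satisfies that constraint anyway because `t_b ≤ 1/2`.
-/

open MeasureTheory

noncomputable section

variable {Ω 𝒳 ζ : Type*} [MeasurableSpace Ω]

theorem measurable_comp_of_forall_measurable {β : Type*} [MeasurableSpace 𝒳] [MeasurableSpace β]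
    [MeasurableSpace ζ] [Countable ζ] [MeasurableSingletonClass ζ] {X : Ω → 𝒳} {Z : Ω → ζ}
    {f : 𝒳 → ζ → β}
    (hf : ∀ z, Measurable fun x => f x z) (hX : Measurable X) (hZ : Measurable Z) :
    Measurable fun ω => f (X ω) (Z ω) :=
  (measurable_from_prod_countable_left (f := Function.uncurry f) hf).comp (hX.prodMk hZ)

variable {μ : Measure Ω} {X : Ω → 𝒳} {Z : Ω → Bool}

theorem integrable_comp_of_forall_bound [MeasurableSpace 𝒳] [IsFiniteMeasure μ]
    (hX : Measurable X) (hZ : Measurable Z) {f : 𝒳 → Bool → ℝ} (hf : ∀ z, Measurable fun x => f x z)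
    (hb : ∀ z, ∃ C, ∀ x, |f x z| ≤ C) : Integrable (fun ω => f (X ω) (Z ω)) μ := by
  choose C hC using hb
  refine Integrable.of_bound (measurable_comp_of_forall_measurable hf hX hZ).aestronglyMeasurable
    (max (C true) (C false)) (ae_of_all _ fun ω => (hC _ _).trans ?_)
  cases Z ω
  · exact le_max_right _ _
  · exact le_max_left _ _

def thresholdRule (p : 𝒳 → Bool → ℝ) (t : Bool → ℝ) : 𝒳 → Bool → ℝ :=
  fun x z => if t z ≤ p x z then 1 else 0

def survival (μ : Measure Ω) (X : Ω → 𝒳) (Z : Ω → Bool) (p : 𝒳 → Bool → ℝ) (z : Bool)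
    (t : ℝ) : ℝ :=
  (μ ({ω | t ≤ p (X ω) (Z ω)} ∩ {ω | Z ω = z})).toReal / (μ {ω | Z ω = z}).toReal

def cvScore (μ : Measure Ω) (X : Ω → 𝒳) (Z : Ω → Bool) (d : 𝒳 → Bool → ℝ) : ℝ :=
  qrate μ X Z d true - qrate μ X Z d false

theorem qrate_thresholdRule (p : 𝒳 → Bool → ℝ) (t : Bool → ℝ) (z : Bool) :
    qrate μ X Z (thresholdRule p t) z = survival μ X Z p z (t z) := by
  have hset : {ω | thresholdRule p t (X ω) (Z ω) = 1} ∩ {ω | Z ω = z}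
      = {ω | t z ≤ p (X ω) (Z ω)} ∩ {ω | Z ω = z} := by
    ext ω
    simp only [Set.mem_inter_iff, Set.mem_ofPred_eq, thresholdRule]
    constructor <;> rintro ⟨h, rfl⟩ <;> split_ifs at * <;> simp_all
  rw [qrate, survival, hset]

theorem survival_antitone [IsFiniteMeasure μ] (p : 𝒳 → Bool → ℝ) (z : Bool) :
    Antitone (survival μ X Z p z) := fun s t hst => by
  refine div_le_div_of_nonneg_right (ENNReal.toReal_mono (measure_ne_top μ _) ?_)
    ENNReal.toReal_nonneg
  exact measure_mono (Set.inter_subset_inter_left _ fun ω hω => hst.trans hω)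

theorem survival_eq_zero {p : 𝒳 → Bool → ℝ} {z : Bool} {t : ℝ}
    (hp : ∀ x z, p x z < t) : survival μ X Z p z t = 0 := by
  simp [survival, fun ω => not_le.mpr (hp (X ω) (Z ω))]

theorem survival_eq_one {p : 𝒳 → Bool → ℝ} {z : Bool} {t : ℝ}
    (hp : ∀ x z, t ≤ p x z) (hz : μ.real {ω | Z ω = z} ≠ 0) : survival μ X Z p z t = 1 := by
  refine (div_eq_one_iff_eq hz).2 ?_
  simp [hp, Measure.real]

theorem mul_sub_le_ite_mul_sub {δ u c : ℝ} (hδ : δ = 0 ∨ δ = 1) :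
    δ * (u - c) ≤ (if c ≤ u then 1 else 0) * (u - c) := by
  split_ifs with h <;> rcases hδ with rfl | rfl <;> linarith

theorem integrable_rule_mul_comp [MeasurableSpace 𝒳] [IsFiniteMeasure μ] (hX : Measurable X)
    (hZ : Measurable Z) {d f : 𝒳 → Bool → ℝ} (hd01 : ∀ x z, d x z = 0 ∨ d x z = 1)
    (hd : ∀ z, Measurable fun x => d x z) (hf : ∀ z, Measurable fun x => f x z)
    (hb : ∀ z, ∃ C, ∀ x, |f x z| ≤ C) :
    Integrable (fun ω => d (X ω) (Z ω) * f (X ω) (Z ω)) μ := by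
  refine integrable_comp_of_forall_bound (f := fun x z => d x z * f x z) hX hZ
    (fun z => (hd z).mul (hf z)) fun z => ?_
  obtain ⟨C, hC⟩ := hb z
  refine ⟨C, fun x => ?_⟩
  rcases hd01 x z with h | h <;> simp only [h, zero_mul, one_mul, abs_zero]
  · exact (abs_nonneg _).trans (hC x)
  · exact hC x

theorem integral_rule_mul_comp [MeasurableSpace 𝒳] [IsFiniteMeasure μ] (hX : Measurable X)
    (hZ : Measurable Z) {d : 𝒳 → Bool → ℝ} (hd01 : ∀ x z, d x z = 0 ∨ d x z = 1)
    (hd : ∀ z, Measurable fun x => d x z) (hZ0 : ∀ z, μ.real {ω | Z ω = z} ≠ 0) (g : Bool → ℝ) :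
    ∫ ω, d (X ω) (Z ω) * g (Z ω) ∂μ = ∑ z, g z * μ.real {ω | Z ω = z} * qrate μ X Z d z := by
  have hS : ∀ z, MeasurableSet ({ω | d (X ω) (Z ω) = 1} ∩ {ω | Z ω = z}) := fun z =>
    (measurable_comp_of_forall_measurable hd hX hZ (measurableSet_singleton 1)).inter
      (hZ (measurableSet_singleton z))
  have hsum : ∀ ω, d (X ω) (Z ω) * g (Z ω)
      = ∑ z, ({ω | d (X ω) (Z ω) = 1} ∩ {ω | Z ω = z}).indicator (fun _ => g z) ω := by
    intro ω
    cases hZω : Z ω <;> rcases hd01 (X ω) (Z ω) with h | h <;> rw [hZω] at h <;>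
      simp [Set.indicator_apply, h, hZω]
  simp_rw [hsum]
  rw [integral_finsetSum _ fun z _ => (integrable_const (g z)).indicator (hS z)]
  refine Finset.sum_congr rfl fun z _ => ?_
  rw [integral_indicator_const _ (hS z), smul_eq_mul, qrate, ← measureReal_def, ← measureReal_def]
  field_simp [hZ0 z]

def lagrangeThreshold (μ : Measure Ω) (Z : Ω → Bool) (η : ℝ) : Bool → ℝ
  | true => 1 / 2 + η / μ.real {ω | Z ω = true}
  | false => 1 / 2 - η / μ.real {ω | Z ω = false}

theorem lagrangeThreshold_false_le {η : ℝ} (hη : 0 ≤ η) : lagrangeThreshold μ Z η false ≤ 1 / 2 :=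
  sub_le_self _ (div_nonneg hη measureReal_nonneg)

section Lagrangian

variable [MeasurableSpace 𝒳] [IsFiniteMeasure μ] {p : 𝒳 → Bool → ℝ}

theorem integrable_rule_mul_sub_threshold (hX : Measurable X) (hZ : Measurable Z)
    (hp : ∀ z, Measurable fun x => p x z) (hp01 : ∀ x z, p x z ∈ Set.Icc (0 : ℝ) 1)
    {d : 𝒳 → Bool → ℝ} (hd01 : ∀ x z, d x z = 0 ∨ d x z = 1)
    (hd : ∀ z, Measurable fun x => d x z) (t : Bool → ℝ) :
    Integrable (fun ω => d (X ω) (Z ω) * (p (X ω) (Z ω) - t (Z ω))) μ :=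
  integrable_rule_mul_comp (f := fun x z => p x z - t z) hX hZ hd01 hd
    (fun z => (hp z).sub measurable_const) fun z =>
      ⟨1 + |t z|, fun x => (abs_sub _ _).trans <| by
        have := hp01 x z
        rw [abs_of_nonneg this.1]
        linarith [this.2]⟩

theorem integral_mul_sub_half_eq_lagrangian (hX : Measurable X) (hZ : Measurable Z)
    (hp : ∀ z, Measurable fun x => p x z) (hp01 : ∀ x z, p x z ∈ Set.Icc (0 : ℝ) 1)
    (hZ0 : ∀ z, μ.real {ω | Z ω = z} ≠ 0) {d : 𝒳 → Bool → ℝ}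
    (hd01 : ∀ x z, d x z = 0 ∨ d x z = 1) (hd : ∀ z, Measurable fun x => d x z) (η : ℝ) :
    ∫ ω, d (X ω) (Z ω) * (p (X ω) (Z ω) - 1 / 2) ∂μ
      = ∫ ω, d (X ω) (Z ω) * (p (X ω) (Z ω) - lagrangeThreshold μ Z η (Z ω)) ∂μ
        + η * cvScore μ X Z d := by
  set t := lagrangeThreshold μ Z η
  have hsplit : (fun ω => d (X ω) (Z ω) * (p (X ω) (Z ω) - 1 / 2))
      = fun ω => d (X ω) (Z ω) * (p (X ω) (Z ω) - t (Z ω))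
          + d (X ω) (Z ω) * (t (Z ω) - 1 / 2) := by
    funext ω; ring
  have hint : Integrable (fun ω => d (X ω) (Z ω) * (t (Z ω) - 1 / 2)) μ :=
    integrable_rule_mul_comp (f := fun _ z => t z - 1 / 2) hX hZ hd01 hd
      (fun _ => measurable_const) fun z => ⟨|t z - 1 / 2|, fun _ => le_rfl⟩
  rw [hsplit, integral_add (integrable_rule_mul_sub_threshold hX hZ hp hp01 hd01 hd t) hint,
    integral_rule_mul_comp hX hZ hd01 hd hZ0 fun z => t z - 1 / 2]
  simp only [Fintype.sum_bool, t, lagrangeThreshold, cvScore]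
  field_simp [hZ0 true, hZ0 false]
  ring

theorem integral_le_integral_thresholdRule_lagrangeThreshold (hX : Measurable X)
    (hZ : Measurable Z) (hp : ∀ z, Measurable fun x => p x z)
    (hp01 : ∀ x z, p x z ∈ Set.Icc (0 : ℝ) 1) (hZ0 : ∀ z, μ.real {ω | Z ω = z} ≠ 0)
    {η γ : ℝ} (hη : 0 ≤ η)
    (hslack : η = 0 ∨ cvScore μ X Z (thresholdRule p (lagrangeThreshold μ Z η)) = γ)
    {d : 𝒳 → Bool → ℝ} (hd01 : ∀ x z, d x z = 0 ∨ d x z = 1)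
    (hd : ∀ z, Measurable fun x => d x z) (hcv : cvScore μ X Z d ≤ γ) :
    ∫ ω, d (X ω) (Z ω) * (p (X ω) (Z ω) - 1 / 2) ∂μ
      ≤ ∫ ω, thresholdRule p (lagrangeThreshold μ Z η) (X ω) (Z ω)
          * (p (X ω) (Z ω) - 1 / 2) ∂μ := by
  set t := lagrangeThreshold μ Z η
  have hstar01 : ∀ x z, thresholdRule p t x z = 0 ∨ thresholdRule p t x z = 1 := fun x z => by
    unfold thresholdRule; split_ifs <;> simp
  have hstar : ∀ z, Measurable fun x => thresholdRule p t x z := fun z =>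
    Measurable.ite (hp z measurableSet_Ici) measurable_const measurable_const
  rw [integral_mul_sub_half_eq_lagrangian hX hZ hp hp01 hZ0 hd01 hd η,
    integral_mul_sub_half_eq_lagrangian hX hZ hp hp01 hZ0 hstar01 hstar η]
  have hpointwise : ∫ ω, d (X ω) (Z ω) * (p (X ω) (Z ω) - t (Z ω)) ∂μ
      ≤ ∫ ω, thresholdRule p t (X ω) (Z ω) * (p (X ω) (Z ω) - t (Z ω)) ∂μ :=
    integral_mono (integrable_rule_mul_sub_threshold hX hZ hp hp01 hd01 hd t)
      (integrable_rule_mul_sub_threshold hX hZ hp hp01 hstar01 hstar t)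
      fun ω => mul_sub_le_ite_mul_sub (hd01 _ _)
  have hpenalty : η * cvScore μ X Z d ≤ η * cvScore μ X Z (thresholdRule p t) := by
    rcases hslack with rfl | h
    · simp
    · rw [h]; exact mul_le_mul_of_nonneg_left hcv hη
  linarith

end Lagrangian

theorem exists_lagrange_multiplier [IsFiniteMeasure μ] {p : 𝒳 → Bool → ℝ}
    (hp01 : ∀ x z, p x z ∈ Set.Icc (0 : ℝ) 1) (hZpos : ∀ z, 0 < μ.real {ω | Z ω = z})
    (hF : ∀ z, Continuous (survival μ X Z p z)) {γ : ℝ} (hγ : -1 ≤ γ) :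
    ∃ η, 0 ≤ η ∧ cvScore μ X Z (thresholdRule p (lagrangeThreshold μ Z η)) ≤ γ ∧
      (η = 0 ∨ cvScore μ X Z (thresholdRule p (lagrangeThreshold μ Z η)) = γ) := by
  set Pa := μ.real {ω | Z ω = true}
  set Pb := μ.real {ω | Z ω = false}
  have hPa : 0 < Pa := hZpos true
  have hPb : 0 < Pb := hZpos false
  set g := fun η => cvScore μ X Z (thresholdRule p (lagrangeThreshold μ Z η))
  have hg : g = fun η => survival μ X Z p true (1 / 2 + η / Pa)
      - survival μ X Z p false (1 / 2 - η / Pb) := by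
    funext η; simp only [g, cvScore, qrate_thresholdRule, lagrangeThreshold, Pa, Pb]
  by_cases h0 : g 0 ≤ γ
  · exact ⟨0, le_rfl, h0, Or.inl rfl⟩
  have hcont : Continuous g :=
    hg ▸ ((hF true).comp (by fun_prop)).sub ((hF false).comp (by fun_prop))
  have hLa : 1 ≤ (Pa + Pb) / Pa := by rw [le_div_iff₀ hPa]; linarith
  have hLb : 1 ≤ (Pa + Pb) / Pb := by rw [le_div_iff₀ hPb]; linarith
  have hgL : g (Pa + Pb) ≤ γ := by
    rw [hg]
    dsimp only
    rw [survival_eq_zero fun x z => by linarith [(hp01 x z).2],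
      survival_eq_one (fun x z => by linarith [(hp01 x z).1]) hPb.ne']
    linarith
  obtain ⟨η, hη, hηγ⟩ := intermediate_value_Icc' (by positivity) hcont.continuousOn
    ⟨hgL, (not_le.1 h0).le⟩
  exact ⟨η, hη.1, hηγ.le, Or.inr hηγ⟩

end

theorem do_no_harm_optimum_is_threshold_rule_general
    {Ω 𝒳 : Type*} [MeasurableSpace Ω] [MeasurableSpace 𝒳]
    (μ : Measure Ω) [IsProbabilityMeasure μ]
    (X : Ω → 𝒳) (Z : Ω → Bool)
    (hX : Measurable X) (hZ : Measurable Z)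
    (p : 𝒳 → Bool → ℝ) (hp : ∀ z, Measurable fun x => p x z)
    (hp01 : ∀ x z, p x z ∈ Set.Icc (0 : ℝ) 1)
    (hZpos : ∀ z, 0 < (μ {ω | Z ω = z}).toReal)
    -- continuous positive-density conditional distributions:
    (hFcont : ∀ z, Continuous fun t =>
      (μ ({ω | t ≤ p (X ω) (Z ω)} ∩ {ω | Z ω = z})).toReal / (μ {ω | Z ω = z}).toReal)
    (duncon : 𝒳 → Bool → ℝ)
    (hduncon : ∀ x z, duncon x z = if (1 / 2 : ℝ) ≤ p x z then 1 else 0)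
    (γ : ℝ) (hγ : 0 ≤ γ) :
    ∃ (ta tb : ℝ) (dstar : 𝒳 → Bool → ℝ),
      tb ≤ 1 / 2 ∧
      (∀ x z, dstar x z = if (if z then ta else tb) ≤ p x z then 1 else 0) ∧
      -- d* satisfies the CV and do-no-harm constraints
      qrate μ X Z dstar true - qrate μ X Z dstar false ≤ γ ∧
      qrate μ X Z duncon false ≤ qrate μ X Z dstar false ∧
      -- d* maximizes utility among rules satisfying both constraints
      (∀ d : 𝒳 → Bool → ℝ,
        (∀ x z, d x z = 0 ∨ d x z = 1) →
        (∀ z, Measurable fun x => d x z) →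
        qrate μ X Z d true - qrate μ X Z d false ≤ γ →
        qrate μ X Z duncon false ≤ qrate μ X Z d false →
        ∫ ω, d (X ω) (Z ω) * (p (X ω) (Z ω) - 1 / 2) ∂μ
          ≤ ∫ ω, dstar (X ω) (Z ω) * (p (X ω) (Z ω) - 1 / 2) ∂μ) := by
  obtain ⟨η, hη, hcv, hslack⟩ :=
    exists_lagrange_multiplier hp01 hZpos hFcont (by linarith : -1 ≤ γ)
  have hduncon_eq : duncon = thresholdRule p fun _ => 1 / 2 := funext₂ hduncon
  refine ⟨lagrangeThreshold μ Z η true, lagrangeThreshold μ Z η false,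
    thresholdRule p (lagrangeThreshold μ Z η), ?_, fun x z => by cases z <;> rfl, hcv, ?_,
    fun d hd01 hd hdcv _ => integral_le_integral_thresholdRule_lagrangeThreshold hX hZ hp hp01
      (fun z => (hZpos z).ne') hη hslack hd01 hd hdcv⟩
  · exact lagrangeThreshold_false_le hη
  · rw [hduncon_eq, qrate_thresholdRule, qrate_thresholdRule]
    exact survival_antitone p false (lagrangeThreshold_false_le hη)

/-- Under the "do no harm" constraint
`q_b(d) ≥ q_b(d_uncon)` (no member of group `b` positively classified by the
unconstrained rule loses their positive decision), the utility-optimal rule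
subject to the CV constraint `q_a − q_b ≤ γ` is still a per-group-threshold
rule, the do-no-harm constraint only imposing the upper bound `t_b ≤ 1/2` on
the group-`b` threshold. (Groups: `true = a`, `false = b`.) -/
theorem do_no_harm_optimum_is_threshold_rule
    {Ω 𝒳 : Type*} [MeasurableSpace Ω] [MeasurableSpace 𝒳]
    (μ : Measure Ω) [IsProbabilityMeasure μ]
    (X : Ω → 𝒳) (Z : Ω → Bool)
    (hX : Measurable X) (hZ : Measurable Z)
    (p : 𝒳 → Bool → ℝ) (hp : ∀ z, Measurable fun x => p x z)
    (hp01 : ∀ x z, p x z ∈ Set.Icc (0 : ℝ) 1)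
    (hZpos : ∀ z, 0 < (μ {ω | Z ω = z}).toReal)
    (hatomless : ∀ z r, μ ({ω | p (X ω) (Z ω) = r} ∩ {ω | Z ω = z}) = 0)
    -- continuous positive-density conditional distributions:
    (hFcont : ∀ z, Continuous fun t =>
      (μ ({ω | t ≤ p (X ω) (Z ω)} ∩ {ω | Z ω = z})).toReal / (μ {ω | Z ω = z}).toReal)
    (hFanti : ∀ z, StrictAntiOn (fun t =>
      (μ ({ω | t ≤ p (X ω) (Z ω)} ∩ {ω | Z ω = z})).toReal / (μ {ω | Z ω = z}).toReal)
      (Set.Icc 0 1))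
    (duncon : 𝒳 → Bool → ℝ)
    (hduncon : ∀ x z, duncon x z = if (1 / 2 : ℝ) ≤ p x z then 1 else 0)
    (γ : ℝ) (hγ : 0 ≤ γ) :
    ∃ (ta tb : ℝ) (dstar : 𝒳 → Bool → ℝ),
      tb ≤ 1 / 2 ∧
      (∀ x z, dstar x z = if (if z then ta else tb) ≤ p x z then 1 else 0) ∧
      -- d* satisfies the CV and do-no-harm constraints
      qrate μ X Z dstar true - qrate μ X Z dstar false ≤ γ ∧
      qrate μ X Z duncon false ≤ qrate μ X Z dstar false ∧
      -- d* maximizes utility among rules satisfying both constraints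
      (∀ d : 𝒳 → Bool → ℝ,
        (∀ x z, d x z = 0 ∨ d x z = 1) →
        (∀ z, Measurable fun x => d x z) →
        qrate μ X Z d true - qrate μ X Z d false ≤ γ →
        qrate μ X Z duncon false ≤ qrate μ X Z d false →
        ∫ ω, d (X ω) (Z ω) * (p (X ω) (Z ω) - 1 / 2) ∂μ
          ≤ ∫ ω, dstar (X ω) (Z ω) * (p (X ω) (Z ω) - 1 / 2) ∂μ) :=
  do_no_harm_optimum_is_threshold_rule_general μ X Z hX hZ p hp hp01 hZpos hFcont duncon hduncon γ
    hγ
end
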